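/- arXiv:2012.03056 — 12 statements merged into one kernel-verified Lean document; each statement's English description precedes it below -/
import Mathlib

section
/- Let R be a commutative ring, M an R-module, A an m × n matrix with entries in M, and b an n × 1 column vector with entries in R (interpreting Ax = b via scalar products of R-entries of x against M-entries of A). Then the linear system Ax = b has a solution x ∈ R^m if and only if for every maximal ideal 𝔭 of R the localized system has a solution in R_𝔭^m. -/
/-!
The system is solvable iff `b` lies in the range of the `R`-linear map `x ↦ (∑ j, x j • A i j)ᵢ`.
Membership in a submodule can be checked at maximal ideals, and since localization commutes with
finite products, the localization of this map at `𝔭` is the same system read over `R_𝔭`.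
-/

open IsLocalizedModule

theorem LinearMap.mem_range_iff_forall_localization_maximal {R M N : Type*} [CommSemiring R]
    [AddCommMonoid M] [Module R M] [AddCommMonoid N] [Module R N]
    (Mₚ : ∀ (P : Ideal R) [P.IsMaximal], Type*)
    [∀ (P : Ideal R) [P.IsMaximal], AddCommMonoid (Mₚ P)]
    [∀ (P : Ideal R) [P.IsMaximal], Module R (Mₚ P)]
    (f : ∀ (P : Ideal R) [P.IsMaximal], M →ₗ[R] Mₚ P)
    [∀ (P : Ideal R) [P.IsMaximal], IsLocalizedModule P.primeCompl (f P)]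
    (Nₚ : ∀ (P : Ideal R) [P.IsMaximal], Type*)
    [∀ (P : Ideal R) [P.IsMaximal], AddCommMonoid (Nₚ P)]
    [∀ (P : Ideal R) [P.IsMaximal], Module R (Nₚ P)]
    (f' : ∀ (P : Ideal R) [P.IsMaximal], N →ₗ[R] Nₚ P)
    [∀ (P : Ideal R) [P.IsMaximal], IsLocalizedModule P.primeCompl (f' P)]
    (g : M →ₗ[R] N) (y : N) :
    y ∈ range g ↔
      ∀ (P : Ideal R) [P.IsMaximal], f' P y ∈ range (map P.primeCompl (f P) (f' P) g) := by
  refine ⟨fun ⟨x, hx⟩ P _ => ⟨f P x, by rw [map_apply, hx]⟩, fun h => ?_⟩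
  refine Submodule.mem_of_localization_maximal Nₚ f' y (range g) fun P _ => ?_
  rw [← range_localizedMap_eq_localized₀_range _ (f P)]
  exact h P

theorem IsLocalizedModule.map_pi_linearCombination {R M : Type*} [CommRing R] [AddCommGroup M]
    [Module R M] (S : Submonoid R) {ι κ : Type*} [Finite ι] [Fintype κ] (A : ι → κ → M) :
    map S (.pi fun j : κ => Algebra.linearMap R (Localization S) ∘ₗ .proj j)
        (.pi fun i : ι => LocalizedModule.mkLinearMap S M ∘ₗ .proj i)
        (.pi fun i => Fintype.linearCombination R (A i)) =
      (LinearMap.pi fun i => Fintype.linearCombination (Localization S)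
        fun j => LocalizedModule.mkLinearMap S M (A i j)).restrictScalars R := by
  refine linearMap_ext S (.pi fun j : κ => Algebra.linearMap R (Localization S) ∘ₗ .proj j)
    (.pi fun i : ι => LocalizedModule.mkLinearMap S M ∘ₗ .proj i) ?_
  ext x i
  simp [Fintype.linearCombination_apply, map_sum, algebraMap_smul]

/-- A linear system with coefficients in a module `M` and unknowns in `R`
has a solution over `R` iff it has a solution over every localization at a maximal ideal. -/
theorem linear_system_local_global {R M : Type*} [CommRing R] [AddCommGroup M] [Module R M]
    {n m : ℕ} (A : Fin n → Fin m → M) (b : Fin n → M) :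
    (∃ x : Fin m → R, ∀ i, (∑ j, x j • A i j) = b i) ↔
      (∀ (p : Ideal R) (_ : p.IsMaximal),
        ∃ x : Fin m → Localization p.primeCompl,
          ∀ i, (∑ j, x j • LocalizedModule.mkLinearMap p.primeCompl M (A i j)) =
            LocalizedModule.mkLinearMap p.primeCompl M (b i)) := by
  let F : (Fin m → R) →ₗ[R] (Fin n → M) := .pi fun i => Fintype.linearCombination R (A i)
  have global :
      (∃ x : Fin m → R, ∀ i, ∑ j, x j • A i j = b i) ↔ b ∈ LinearMap.range F := by
    simp [F, funext_iff, Fintype.linearCombination_apply]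
  rw [global, LinearMap.mem_range_iff_forall_localization_maximal
    (fun P _ => Fin m → Localization P.primeCompl)
    (fun P _ => .pi fun j => Algebra.linearMap R _ ∘ₗ .proj j)
    (fun P _ => Fin n → LocalizedModule P.primeCompl M)
    (fun P _ => .pi fun i => LocalizedModule.mkLinearMap P.primeCompl M ∘ₗ .proj i)]
  refine forall₂_congr fun P _ => ?_
  rw [map_pi_linearCombination]
  simp [funext_iff, Fintype.linearCombination_apply]
end

section
/- Let M be a two-generated faithful module over a commutative ring R, and let m, m' be two generating pairs of M. Then m and m' lie in the same orbit under the right action of SL₂(R) if and only if for every maximal ideal 𝔭 of R, the images of m and m' in M_𝔭 lie in the same orbit under SL₂(R_𝔭). -/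
/-!
Write `v · A` for the pair `(∑ i, A i 0 • v i, ∑ i, A i 1 • v i)`, and let `I(v)` be the ideal of
sums `y 0 + z 1` over relations `y, z` of `v`. If `v · A = v · B` then `det A ≡ det B (mod I(v))`,
so, choosing any `A` with `w = v · A`, local equivalence says that `det A - 1` lies in `I(v)`
locally at every maximal ideal, hence globally. Faithfulness makes any two relations of `v`
proportional (`y 0 * z 1 = y 1 * z 0`), and this is what allows a correction of `A` by a matrix
with relation columns to have determinant exactly `1`.
-/

open Matrix

section

variable {R M : Type*} [CommRing R] [AddCommGroup M] [Module R M]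

def relations {ι : Type*} [Fintype ι] (v : ι → M) : Submodule R (ι → R) :=
  LinearMap.ker (Fintype.linearCombination R v)

def relationIdeal (v : Fin 2 → M) : Ideal R :=
  (relations v).map (LinearMap.proj 0) ⊔ (relations v).map (LinearMap.proj 1)

@[simp]
lemma mem_relations_iff {ι : Type*} [Fintype ι] {v : ι → M} {y : ι → R} :
    y ∈ relations v ↔ ∑ i, y i • v i = 0 := by
  rw [relations, LinearMap.mem_ker, Fintype.linearCombination_apply]

lemma mem_relationIdeal_iff {v : Fin 2 → M} {r : R} :
    r ∈ relationIdeal v ↔ ∃ y ∈ relations v, ∃ z ∈ relations v, y 0 + z 1 = r := by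
  simp [relationIdeal, Submodule.mem_sup]

lemma exists_matrix_of_span_eq_top {ι κ : Type*} [Fintype ι] {v : ι → M}
    (hv : Submodule.span R (Set.range v) = ⊤) (w : κ → M) :
    ∃ A : Matrix ι κ R, ∀ j, w j = ∑ i, A i j • v i := by
  have (j : κ) : ∃ c : ι → R, ∑ i, c i • v i = w j :=
    (Submodule.mem_span_range_iff_exists_fun R).mp (hv ▸ Submodule.mem_top)
  choose c hc using this
  exact ⟨of fun i j => c j i, fun j => (hc j).symm⟩

lemma transpose_sub_mem_relations {ι κ : Type*} [Fintype ι] {v : ι → M} {w : κ → M}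
    {A B : Matrix ι κ R} (hA : ∀ j, w j = ∑ i, A i j • v i) (hB : ∀ j, w j = ∑ i, B i j • v i)
    (j : κ) :
    (A - B)ᵀ j ∈ relations v := by
  simp [sub_smul, Finset.sum_sub_distrib, ← hA, ← hB]

lemma det_sub_det_mem_relationIdeal {v w : Fin 2 → M} {A B : Matrix (Fin 2) (Fin 2) R}
    (hA : ∀ j, w j = ∑ i, A i j • v i) (hB : ∀ j, w j = ∑ i, B i j • v i) :
    A.det - B.det ∈ relationIdeal v := by
  set c := (A - B)ᵀ
  have hc := transpose_sub_mem_relations hA hB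
  refine mem_relationIdeal_iff.mpr ⟨(B 1 1 + c 1 1) • c 0 - (B 1 0 + c 0 1) • c 1,
    sub_mem (Submodule.smul_mem _ _ (hc 0)) (Submodule.smul_mem _ _ (hc 1)),
    B 0 0 • c 1 - B 0 1 • c 0,
    sub_mem (Submodule.smul_mem _ _ (hc 1)) (Submodule.smul_mem _ _ (hc 0)), ?_⟩
  simp only [c, det_fin_two, Pi.sub_apply, Pi.smul_apply, smul_eq_mul, transpose_apply,
    Matrix.sub_apply]
  ring

lemma sum_add_smul_eq_of_mem_relations {ι κ : Type*} [Fintype ι] {v : ι → M}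
    (A : Matrix ι κ R) {C : Matrix ι κ R} (hC : ∀ j, Cᵀ j ∈ relations v) (j : κ) :
    ∑ i, (A + C) i j • v i = ∑ i, A i j • v i := by
  simpa [add_smul, Finset.sum_add_distrib] using hC j

lemma mul_eq_mul_of_mem_relations [FaithfulSMul R M] {v : Fin 2 → M}
    (hv : Submodule.span R (Set.range v) = ⊤) {y z : Fin 2 → R}
    (hy : y ∈ relations v) (hz : z ∈ relations v) :
    y 0 * z 1 = y 1 * z 0 := by
  rw [mem_relations_iff, Fin.sum_univ_two] at hy hz
  have hkill : ∀ i, (y 0 * z 1 - y 1 * z 0) • v i = 0 := Fin.forall_fin_two.mpr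
    ⟨by linear_combination (norm := module) z 1 • hy - y 1 • hz,
      by linear_combination (norm := module) y 0 • hz - z 0 • hy⟩
  have hann : y 0 * z 1 - y 1 * z 0 ∈ Module.annihilator R M := by
    rw [← Submodule.annihilator_top, ← hv, Submodule.mem_annihilator_span]
    rintro ⟨_, i, rfl⟩
    exact hkill i
  rw [Module.annihilator_eq_bot.mpr ‹_›, Ideal.mem_bot] at hann
  exact sub_eq_zero.mp hann

lemma transpose_mul_sub_one_mem_relations {ι κ : Type*} [Fintype ι] [Fintype κ] [DecidableEq ι]
    {v : ι → M} {w : κ → M} {A : Matrix ι κ R} {B : Matrix κ ι R}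
    (hA : ∀ j, w j = ∑ i, A i j • v i) (hB : ∀ j, v j = ∑ i, B i j • w i) (j : ι) :
    (A * B - 1)ᵀ j ∈ relations v := by
  simp only [mem_relations_iff, transpose_apply, Matrix.sub_apply, sub_smul,
    Finset.sum_sub_distrib, one_apply, ite_smul, one_smul, zero_smul, Finset.sum_ite_eq',
    Finset.mem_univ, if_true, mul_apply, Finset.sum_smul, mul_smul]
  rw [Finset.sum_comm, sub_eq_zero, hB j]
  simp only [smul_comm (A _ _), ← Finset.smul_sum, hA]

lemma exists_det_add_eq_one [FaithfulSMul R M] {v w : Fin 2 → M}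
    (hv : Submodule.span R (Set.range v) = ⊤) (hw : Submodule.span R (Set.range w) = ⊤)
    {A : Matrix (Fin 2) (Fin 2) R} (hA : ∀ j, w j = ∑ i, A i j • v i)
    (hdet : A.det - 1 ∈ relationIdeal v) :
    ∃ C : Matrix (Fin 2) (Fin 2) R, (∀ j, Cᵀ j ∈ relations v) ∧ (A + C).det = 1 := by
  obtain ⟨y, hy, z, hz, hsum⟩ := mem_relationIdeal_iff.mp hdet
  obtain ⟨B, hB⟩ := exists_matrix_of_span_eq_top hw v
  have hN := transpose_mul_sub_one_mem_relations hA hB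
  -- `C = -[y z] · adj B`
  let C : Matrix (Fin 2) (Fin 2) R :=
    of fun i j => ![-B 1 1, B 0 1] j * y i + ![B 1 0, -B 0 0] j * z i
  refine ⟨C, fun j => add_mem (Submodule.smul_mem _ _ hy) (Submodule.smul_mem _ _ hz), ?_⟩
  have hyz := mul_eq_mul_of_mem_relations hv hy hz
  have hy1 := mul_eq_mul_of_mem_relations hv hy (hN 1)
  have hz0 := mul_eq_mul_of_mem_relations hv hz (hN 0)
  simp only [transpose_apply, Matrix.sub_apply, mul_apply, Fin.sum_univ_two, one_apply_eq,
    one_apply_ne zero_ne_one, one_apply_ne one_ne_zero] at hy1 hz0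
  simp only [C, det_fin_two, Matrix.add_apply, of_apply, cons_val_zero, cons_val_one,
    cons_val_fin_one] at hsum ⊢
  linear_combination -hsum - hy1 + hz0 + (B 0 0 * B 1 1 - B 0 1 * B 1 0) * hyz

lemma map_eq_sum_map_smul {ι κ S N : Type*} [Fintype ι] [CommRing S] [Algebra R S]
    [AddCommGroup N] [Module R N] [Module S N] [IsScalarTower R S N] (f : M →ₗ[R] N)
    {v : ι → M} {w : κ → M} {A : Matrix ι κ R} (hA : ∀ j, w j = ∑ i, A i j • v i) (j : κ) :
    f (w j) = ∑ i, A.map (algebraMap R S) i j • f (v i) := by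
  simp [hA, algebraMap_smul]

section Localization

variable {Rₛ Mₛ : Type*} [CommRing Rₛ] [Algebra R Rₛ] [AddCommGroup Mₛ] [Module R Mₛ]
  [Module Rₛ Mₛ] [IsScalarTower R Rₛ Mₛ] (S : Submonoid R) [IsLocalization S Rₛ]

lemma exists_mk'_eq_of_mem_relations {ι : Type*} [Fintype ι] (f : M →ₗ[R] Mₛ)
    [IsLocalizedModule S f] {v : ι → M} {y : ι → Rₛ} (hy : y ∈ relations (fun i => f (v i))) :
    ∃ y' ∈ relations v, ∃ s : S, ∀ i, IsLocalization.mk' Rₛ (y' i) s = y i := by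
  obtain ⟨b, hb⟩ := IsLocalization.exist_integer_multiples_of_finite S y
  choose num hnum using hb
  have hrel : f (∑ i, num i • v i) = 0 := by
    simp only [map_sum, map_smul, ← algebraMap_smul Rₛ (num _), hnum, Algebra.smul_def,
      mul_smul, ← Finset.smul_sum]
    rw [mem_relations_iff.mp hy, smul_zero]
  obtain ⟨c, hc⟩ := (IsLocalizedModule.eq_zero_iff S f).mp hrel
  refine ⟨(c : R) • num, ?_, c * b, fun i => ?_⟩
  · simpa [mul_smul, ← Finset.smul_sum, Submonoid.smul_def] using hc
  · rw [IsLocalization.mk'_eq_iff_eq_mul]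
    simp only [Pi.smul_apply, smul_eq_mul, map_mul, hnum, Algebra.smul_def, Submonoid.coe_mul]
    ring

lemma relationIdeal_le_map (f : M →ₗ[R] Mₛ) [IsLocalizedModule S f] (v : Fin 2 → M) :
    relationIdeal (fun i => f (v i)) ≤ (relationIdeal v).map (algebraMap R Rₛ) := by
  intro r hr
  obtain ⟨y, hy, z, hz, rfl⟩ := mem_relationIdeal_iff.mp hr
  obtain ⟨y', hy', s, hys⟩ := exists_mk'_eq_of_mem_relations S f hy
  obtain ⟨z', hz', t, hzt⟩ := exists_mk'_eq_of_mem_relations S f hz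
  rw [← hys 0, ← hzt 1]
  have hmem (a : R) (ha : a ∈ relationIdeal v) (u : S) :
      IsLocalization.mk' Rₛ a u ∈ (relationIdeal v).map (algebraMap R Rₛ) := by
    rw [IsLocalization.mk'_eq_mul_mk'_one]
    exact Ideal.mul_mem_right _ _ (Ideal.mem_map_of_mem _ ha)
  exact add_mem (hmem _ (mem_relationIdeal_iff.mpr ⟨y', hy', 0, zero_mem _, add_zero _⟩) s)
    (hmem _ (mem_relationIdeal_iff.mpr ⟨0, zero_mem _, z', hz', zero_add _⟩) t)

end Localization

end

theorem sl2_equiv_local_global_general {R M : Type*} [CommRing R] [AddCommGroup M] [Module R M]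
    (hfaithful : ∀ r : R, (∀ x : M, r • x = 0) → r = 0)
    (v w : Fin 2 → M)
    (hv : Submodule.span R (Set.range v) = ⊤)
    (hw : Submodule.span R (Set.range w) = ⊤) :
    (∃ σ : Matrix.SpecialLinearGroup (Fin 2) R,
        ∀ j, w j = ∑ i, (σ : Matrix (Fin 2) (Fin 2) R) i j • v i) ↔
      (∀ (p : Ideal R) (_ : p.IsMaximal),
        ∃ σ : Matrix.SpecialLinearGroup (Fin 2) (Localization p.primeCompl),
          ∀ j, LocalizedModule.mkLinearMap p.primeCompl M (w j) =
            ∑ i, (σ : Matrix (Fin 2) (Fin 2) (Localization p.primeCompl)) i j •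
              LocalizedModule.mkLinearMap p.primeCompl M (v i)) := by
  have : FaithfulSMul R M :=
    ⟨fun h => sub_eq_zero.mp (hfaithful _ fun x => by rw [sub_smul, h, sub_self])⟩
  constructor
  · rintro ⟨σ, hσ⟩ p _
    exact ⟨σ.map (algebraMap R _), map_eq_sum_map_smul _ hσ⟩
  · intro h
    obtain ⟨A, hA⟩ := exists_matrix_of_span_eq_top hv w
    have hdet : A.det - 1 ∈ relationIdeal v := Ideal.mem_of_localization_maximal fun p hp => by
      obtain ⟨σ, hσ⟩ := h p hp
      have hdiff := det_sub_det_mem_relationIdeal (map_eq_sum_map_smul _ hA) hσ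
      rw [σ.det_coe, ← RingHom.mapMatrix_apply, ← RingHom.map_det] at hdiff
      simpa using relationIdeal_le_map p.primeCompl _ v hdiff
    obtain ⟨C, hC, hdetC⟩ := exists_det_add_eq_one hv hw hA hdet
    exact ⟨⟨A + C, hdetC⟩, fun j => (hA j).trans (sum_add_smul_eq_of_mem_relations A hC j).symm⟩

/-- For a faithful two-generated module `M`, two generating pairs are
`SL₂(R)`-equivalent iff they are `SL₂(R_𝔭)`-equivalent at every maximal ideal `𝔭`. -/
theorem sl2_equiv_local_global {R M : Type*} [CommRing R] [AddCommGroup M] [Module R M]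
    (hfaithful : ∀ r : R, (∀ x : M, r • x = 0) → r = 0)
    (htwo : ∃ a b : M, Submodule.span R {a, b} = ⊤)
    (v w : Fin 2 → M)
    (hv : Submodule.span R (Set.range v) = ⊤)
    (hw : Submodule.span R (Set.range w) = ⊤) :
    (∃ σ : Matrix.SpecialLinearGroup (Fin 2) R,
        ∀ j, w j = ∑ i, (σ : Matrix (Fin 2) (Fin 2) R) i j • v i) ↔
      (∀ (p : Ideal R) (_ : p.IsMaximal),
        ∃ σ : Matrix.SpecialLinearGroup (Fin 2) (Localization p.primeCompl),
          ∀ j, LocalizedModule.mkLinearMap p.primeCompl M (w j) =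
            ∑ i, (σ : Matrix (Fin 2) (Fin 2) (Localization p.primeCompl)) i j •
              LocalizedModule.mkLinearMap p.primeCompl M (v i)) :=
  sl2_equiv_local_global_general hfaithful v w hv hw
end

section
/- Let M be a two-generated locally cyclic module over a commutative ring R such that the natural homomorphism SL₂(R) → SL₂(R/ann(M)) is surjective. Then SL₂(R) acts transitively on the set of generating pairs of M. -/
/-!
Write `v ⬝ A` for `columnCombination v A` and fix `A₀` with `w = v ⬝ A₀`. Every other solution
of `w = v ⬝ A` is `A₀ + N` with `v ⬝ N = 0`, and then `det N` annihilates `M` (as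
`v ⬝ (N * adj N) = 0`), so modulo `ann M` we get `det A = det A₀ + tr (adj A₀ * N)`: the reachable
determinants form a coset of an ideal, and whether `1` lies in it is a local question. Over `R_𝔭`
the module is cyclic, say `R_𝔭 g`, and both pairs are images of `(g, 0)` under matrices of
determinant `1` modulo the annihilator, which gives a local solution; clearing denominators brings
it back to `R`. Finally a matrix of determinant `1` modulo `ann M` lifts to `SL₂(R)` by the
surjectivity hypothesis.
-/

open Matrix

section ColumnCombination

variable {R M : Type*} [CommRing R] [AddCommGroup M] [Module R M] {ι : Type*} [Fintype ι]

def columnCombination (v : ι → M) : Matrix ι ι R →ₗ[R] ι → M where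
  toFun A j := ∑ i, A i j • v i
  map_add' A B := by ext j; simp [add_smul, Finset.sum_add_distrib]
  map_smul' c A := by ext j; simp [Finset.smul_sum, mul_smul]

@[simp]
lemma columnCombination_apply (v : ι → M) (A : Matrix ι ι R) (j : ι) :
    columnCombination v A j = ∑ i, A i j • v i :=
  rfl

lemma columnCombination_mul (v : ι → M) (A B : Matrix ι ι R) :
    columnCombination v (A * B) = columnCombination (columnCombination v A : ι → M) B := by
  ext k
  simp only [columnCombination_apply, mul_apply, Finset.sum_smul, Finset.smul_sum, mul_smul]
  rw [Finset.sum_comm]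
  simp only [smul_comm (A _ _)]

lemma columnCombination_one [DecidableEq ι] (v : ι → M) :
    columnCombination v (1 : Matrix ι ι R) = v := by
  ext j
  simp [one_apply]

lemma exists_columnCombination_eq {v : ι → M} (hv : Submodule.span R (Set.range v) = ⊤)
    (w : ι → M) : ∃ A : Matrix ι ι R, columnCombination v A = w := by
  choose c hc using fun j =>
    (Submodule.mem_span_range_iff_exists_fun R).mp (hv ▸ Submodule.mem_top : w j ∈ _)
  exact ⟨(of c)ᵀ, funext hc⟩

omit [Fintype ι] in
lemma mem_annihilator_of_forall_smul_eq_zero {v : ι → M}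
    (hv : Submodule.span R (Set.range v) = ⊤) {r : R} (h : ∀ i, r • v i = 0) :
    r ∈ Module.annihilator R M := by
  rw [← Submodule.annihilator_top, ← hv, Submodule.mem_annihilator_span]
  rintro ⟨_, i, rfl⟩
  exact h i

lemma det_mem_annihilator_of_columnCombination_eq_zero [DecidableEq ι] {v : ι → M}
    (hv : Submodule.span R (Set.range v) = ⊤) {N : Matrix ι ι R}
    (hN : columnCombination v N = 0) : N.det ∈ Module.annihilator R M := by
  have h := columnCombination_mul v N N.adjugate
  rw [mul_adjugate, map_smul, columnCombination_one, hN] at h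
  refine mem_annihilator_of_forall_smul_eq_zero hv fun i => ?_
  simpa using congrFun h i

lemma columnCombination_eq_of_sub_mem_annihilator (v : ι → M) {A B : Matrix ι ι R}
    (h : ∀ i j, A i j - B i j ∈ Module.annihilator R M) :
    columnCombination v A = columnCombination v B := by
  ext j
  refine Finset.sum_congr rfl fun i _ => ?_
  rw [← sub_eq_zero, ← sub_smul]
  exact Module.mem_annihilator.mp (h i j) _

end ColumnCombination

section Cyclic

variable {R M : Type*} [CommRing R] [AddCommGroup M] [Module R M]

lemma smul_eq_self_of_sub_one_mem_annihilator {r : R} (hr : r - 1 ∈ Module.annihilator R M)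
    (m : M) : r • m = m := by
  have h := Module.mem_annihilator.mp hr m
  rwa [sub_smul, one_smul, sub_eq_zero] at h

lemma exists_columnCombination_cons_zero_eq_of_span_singleton_eq_top {g : M}
    (hg : Submodule.span R {g} = ⊤) {v : Fin 2 → M} (hv : Submodule.span R (Set.range v) = ⊤) :
    ∃ E : Matrix (Fin 2) (Fin 2) R,
      columnCombination ![g, 0] E = v ∧ E.det - 1 ∈ Module.annihilator R M := by
  choose r hr using fun i => Submodule.mem_span_singleton.mp (hg ▸ Submodule.mem_top : v i ∈ _)
  obtain ⟨α, hα⟩ := (Submodule.mem_span_range_iff_exists_fun R).mp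
    (hv ▸ Submodule.mem_top : g ∈ _)
  refine ⟨!![r 0, r 1; -α 1, α 0], ?_, ?_⟩
  · ext j
    fin_cases j <;> simp [hr]
  · rw [← Submodule.annihilator_top, ← hg, Submodule.mem_annihilator_span_singleton]
    have h : (det !![r 0, r 1; -α 1, α 0] - 1) • g = ∑ i, α i • v i - g := by
      simp only [det_fin_two_of, Fin.sum_univ_two, ← hr]
      module
    rw [h, hα, sub_self]

theorem exists_columnCombination_eq_det_sub_one_mem_of_span_singleton_eq_top {g : M}
    (hg : Submodule.span R {g} = ⊤) {v w : Fin 2 → M}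
    (hv : Submodule.span R (Set.range v) = ⊤) (hw : Submodule.span R (Set.range w) = ⊤) :
    ∃ B : Matrix (Fin 2) (Fin 2) R,
      columnCombination v B = w ∧ B.det - 1 ∈ Module.annihilator R M := by
  obtain ⟨E, rfl, hE⟩ := exists_columnCombination_cons_zero_eq_of_span_singleton_eq_top hg hv
  obtain ⟨F, rfl, hF⟩ := exists_columnCombination_cons_zero_eq_of_span_singleton_eq_top hg hw
  refine ⟨E.adjugate * F, ?_, ?_⟩
  · rw [← columnCombination_mul, ← Matrix.mul_assoc, mul_adjugate, smul_mul, Matrix.one_mul,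
      map_smul]
    ext j
    exact smul_eq_self_of_sub_one_mem_annihilator hE _
  · have h : (E.adjugate * F).det - 1 = (E.det - 1) * F.det + (F.det - 1) := by
      rw [det_mul, det_adjugate, Fintype.card_fin, Nat.add_one_sub_one, pow_one]
      ring
    rw [h]
    exact add_mem (Ideal.mul_mem_right _ _ hE) hF

end Cyclic

section Localization

variable {R M : Type*} [CommRing R] [AddCommGroup M] [Module R M] {ι : Type*} [Fintype ι]

lemma columnCombination_comp_map_algebraMap {R' N : Type*} [CommRing R'] [Algebra R R']
    [AddCommGroup N] [Module R N] [Module R' N] [IsScalarTower R R' N] (f : M →ₗ[R] N)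
    (v : ι → M) (A : Matrix ι ι R) :
    columnCombination (f ∘ v) (A.map (algebraMap R R')) = f ∘ columnCombination v A := by
  ext j
  simp [algebraMap_smul]

omit [Fintype ι] in
lemma LocalizedModule.span_range_mkLinearMap_comp_eq_top (S : Submonoid R) {v : ι → M}
    (hv : Submodule.span R (Set.range v) = ⊤) :
    Submodule.span (Localization S) (Set.range (LocalizedModule.mkLinearMap S M ∘ v)) = ⊤ := by
  rw [Set.range_comp]
  exact span_eq_top_of_isLocalizedModule _ S _ hv

omit [Fintype ι] in
lemma LocalizedModule.exists_smul_eq_zero_of_forall_mkLinearMap_eq_zero [Finite ι]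
    (S : Submonoid R) {x : ι → M} (h : ∀ i, LocalizedModule.mkLinearMap S M (x i) = 0) :
    ∃ u : S, u • x = 0 :=
  (IsLocalizedModule.eq_zero_iff S
    (LinearMap.pi fun i => LocalizedModule.mkLinearMap S M ∘ₗ LinearMap.proj i)).mp (funext h)

lemma IsLocalization.exists_map_algebraMap_eq_smul {R' : Type*} [CommRing R'] [Algebra R R']
    (S : Submonoid R) [IsLocalization S R'] (B : Matrix ι ι R') :
    ∃ s : S, ∃ A : Matrix ι ι R, A.map (algebraMap R R') = (s : R) • B := by
  obtain ⟨s, hs⟩ := IsLocalization.exist_integer_multiples_of_finite S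
    (fun ij : ι × ι => B ij.1 ij.2)
  choose a ha using hs
  exact ⟨s, of fun i j => a (i, j), by ext i j; exact ha (i, j)⟩

theorem exists_columnCombination_eq_smul_of_localization [DecidableEq ι] [Nonempty ι]
    (S : Submonoid R) {v w : ι → M} (hv : Submodule.span R (Set.range v) = ⊤)
    {B : Matrix ι ι (Localization S)}
    (hB : columnCombination (LocalizedModule.mkLinearMap S M ∘ v) B =
      LocalizedModule.mkLinearMap S M ∘ w)
    (hdet : B.det - 1 ∈ Module.annihilator (Localization S) (LocalizedModule S M)) :
    ∃ s ∈ S, ∃ A : Matrix ι ι R,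
      columnCombination v A = s • w ∧ A.det - s ^ Fintype.card ι ∈ Module.annihilator R M := by
  set f := LocalizedModule.mkLinearMap S M
  obtain ⟨s, A, hA⟩ := IsLocalization.exists_map_algebraMap_eq_smul S B
  have hcomb : ∀ j, f (columnCombination v A j - (s : R) • w j) = 0 := by
    intro j
    have h := congrFun (columnCombination_comp_map_algebraMap (R' := Localization S) f v A) j
    rw [hA, ← algebraMap_smul (Localization S), map_smul, hB] at h
    rw [map_sub, map_smul, ← Function.comp_apply (f := f), ← h, Pi.smul_apply,
      Function.comp_apply, algebraMap_smul, sub_self]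
  have hdet' : ∀ i, f ((A.det - (s : R) ^ Fintype.card ι) • v i) = 0 := by
    intro i
    have h : algebraMap R (Localization S) (A.det - (s : R) ^ Fintype.card ι) =
        algebraMap R (Localization S) (s : R) ^ Fintype.card ι * (B.det - 1) := by
      rw [map_sub, map_pow, RingHom.map_det, RingHom.mapMatrix_apply, hA,
        ← algebraMap_smul (Localization S), det_smul]
      ring
    rw [map_smul, ← algebraMap_smul (Localization S), h, mul_smul,
      Module.mem_annihilator.mp hdet, smul_zero]
  obtain ⟨u₁, hu₁⟩ :=
    LocalizedModule.exists_smul_eq_zero_of_forall_mkLinearMap_eq_zero S hcomb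
  obtain ⟨u₂, hu₂⟩ :=
    LocalizedModule.exists_smul_eq_zero_of_forall_mkLinearMap_eq_zero S hdet'
  set u : R := u₁ * u₂
  have hcomb' : u • columnCombination v A = u • (s : R) • w := by
    ext j
    have h := congrFun hu₁ j
    simp only [Pi.smul_apply, Submonoid.smul_def, smul_sub, sub_eq_zero, Pi.zero_apply] at h
    simp only [Pi.smul_apply, u, mul_comm (u₁ : R), mul_smul, h]
  have hu : u * (A.det - (s : R) ^ Fintype.card ι) ∈ Module.annihilator R M := by
    refine mem_annihilator_of_forall_smul_eq_zero hv fun i => ?_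
    have h := congrFun hu₂ i
    simp only [Pi.smul_apply, Submonoid.smul_def, Pi.zero_apply] at h
    simp only [u, mul_smul, h, smul_zero]
  refine ⟨u * s, S.mul_mem (S.mul_mem u₁.2 u₂.2) s.2, u • A, ?_, ?_⟩
  · rw [map_smul, hcomb', ← mul_smul]
  · have h : (u • A).det - (u * s) ^ Fintype.card ι =
        u ^ (Fintype.card ι - 1) * (u * (A.det - (s : R) ^ Fintype.card ι)) := by
      rw [det_smul, ← mul_assoc, ← pow_succ, Nat.sub_add_cancel Fintype.card_pos]
      ring
    rw [h]
    exact Ideal.mul_mem_left _ _ hu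

end Localization

section DetVariation

variable {R M : Type*} [CommRing R] [AddCommGroup M] [Module R M]

lemma det_smul_add_fin_two (t : R) (A N : Matrix (Fin 2) (Fin 2) R) :
    (t • A + N).det = t ^ 2 * A.det + t * (A.adjugate * N).trace + N.det := by
  simp only [det_fin_two, adjugate_fin_two, trace_fin_two, mul_apply, Fin.sum_univ_two,
    Matrix.add_apply, Matrix.smul_apply, smul_eq_mul, of_apply, cons_val', cons_val_zero,
    cons_val_one, empty_val', cons_val_fin_one]
  ring

/-- Modulo `ann M`, the determinants of the matrices `A'` with `v ⬝ A' = v ⬝ A` form the coset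
`A.det + detVariationIdeal v A`: `N ↦ trace (adj A * N)` is the derivative of `det` at `A`. -/
def detVariationIdeal (v : Fin 2 → M) (A : Matrix (Fin 2) (Fin 2) R) : Ideal R :=
  (LinearMap.ker (columnCombination v)).map
      (traceLinearMap (Fin 2) R R ∘ₗ LinearMap.mulLeft R A.adjugate) ⊔
    Module.annihilator R M

lemma sq_mul_one_sub_det_mem_detVariationIdeal {v : Fin 2 → M}
    (hv : Submodule.span R (Set.range v) = ⊤) {A B : Matrix (Fin 2) (Fin 2) R} {t : R}
    (hB : columnCombination v B = t • columnCombination v A)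
    (hdet : B.det - t ^ 2 ∈ Module.annihilator R M) :
    t ^ 2 * (1 - A.det) ∈ detVariationIdeal v A := by
  set N := B - t • A
  have hN : columnCombination v N = 0 := by rw [map_sub, map_smul, hB, sub_self]
  have h : t ^ 2 * (1 - A.det) = -(B.det - t ^ 2) + t * (A.adjugate * N).trace + N.det := by
    rw [← add_sub_cancel (t • A) B, det_smul_add_fin_two]
    ring
  rw [h]
  refine add_mem (add_mem (Submodule.mem_sup_right (neg_mem hdet)) (Ideal.mul_mem_left _ _ ?_))
    (Submodule.mem_sup_right (det_mem_annihilator_of_columnCombination_eq_zero hv hN))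
  exact Submodule.mem_sup_left (Submodule.mem_map_of_mem hN)

lemma exists_columnCombination_eq_det_sub_one_mem_of_one_sub_det_mem {v : Fin 2 → M}
    (hv : Submodule.span R (Set.range v) = ⊤) {A : Matrix (Fin 2) (Fin 2) R}
    (h : 1 - A.det ∈ detVariationIdeal v A) :
    ∃ B, columnCombination v B = columnCombination v A ∧ B.det - 1 ∈ Module.annihilator R M := by
  obtain ⟨_, ⟨N, hN, rfl⟩, z, hz, hsum⟩ := Submodule.mem_sup.mp h
  refine ⟨A + N, by rw [map_add, LinearMap.mem_ker.mp hN, add_zero], ?_⟩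
  have htrace : (A.adjugate * N).trace = 1 - A.det - z := eq_sub_of_add_eq hsum
  have hdet : (A + N).det - 1 = N.det - z := by
    rw [← one_smul R A, det_smul_add_fin_two, htrace]
    ring
  rw [hdet]
  exact sub_mem (det_mem_annihilator_of_columnCombination_eq_zero hv hN) hz

end DetVariation

lemma Submodule.mem_of_forall_isMaximal_exists_smul_mem {R M : Type*} [CommRing R]
    [AddCommGroup M] [Module R M] {N : Submodule R M} {m : M}
    (h : ∀ P : Ideal R, P.IsMaximal → ∃ s ∉ P, s • m ∈ N) : m ∈ N := by
  let J : Ideal R := N.comap (LinearMap.toSpanSingleton R M m)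
  suffices J = ⊤ by simpa [J] using J.eq_top_iff_one.mp this
  by_contra hJ
  obtain ⟨P, hP, hle⟩ := J.exists_le_maximal hJ
  obtain ⟨s, hs, hsm⟩ := h P hP
  exact hs (hle hsm)

lemma exists_specialLinearGroup_sub_mem_of_det_sub_one_mem {R n : Type*} [CommRing R]
    [Fintype n] [DecidableEq n] {I : Ideal R}
    (hsurj : Function.Surjective (Matrix.SpecialLinearGroup.map (n := n) (Ideal.Quotient.mk I)))
    {A : Matrix n n R} (hA : A.det - 1 ∈ I) :
    ∃ σ : Matrix.SpecialLinearGroup n R, ∀ i j, (σ : Matrix n n R) i j - A i j ∈ I := by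
  have hdet : ((Ideal.Quotient.mk I).mapMatrix A).det = 1 := by
    rw [← RingHom.map_det, ← map_one (Ideal.Quotient.mk I), Ideal.Quotient.eq]
    exact hA
  obtain ⟨σ, hσ⟩ := hsurj ⟨_, hdet⟩
  refine ⟨σ, fun i j => Ideal.Quotient.eq.mp ?_⟩
  simpa using
    congrArg (fun τ : Matrix.SpecialLinearGroup n (R ⧸ I) => (τ : Matrix n n (R ⧸ I)) i j) hσ

theorem sl2_transitive_of_locally_cyclic_general {R M : Type*} [CommRing R] [AddCommGroup M]
    [Module R M]
    (hloccyc : ∀ (p : Ideal R) (_ : p.IsMaximal),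
      ∃ g : LocalizedModule p.primeCompl M,
        Submodule.span (Localization p.primeCompl) {g} = ⊤)
    (hsurj : Function.Surjective
      (Matrix.SpecialLinearGroup.map (n := Fin 2)
        (Ideal.Quotient.mk ((⊤ : Submodule R M).annihilator))))
    (v w : Fin 2 → M)
    (hv : Submodule.span R (Set.range v) = ⊤)
    (hw : Submodule.span R (Set.range w) = ⊤) :
    ∃ σ : Matrix.SpecialLinearGroup (Fin 2) R,
      ∀ j, w j = ∑ i, (σ : Matrix (Fin 2) (Fin 2) R) i j • v i := by
  rw [Submodule.annihilator_top] at hsurj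
  obtain ⟨A₀, rfl⟩ := exists_columnCombination_eq (R := R) hv w
  have hlocal : ∀ P : Ideal R, P.IsMaximal →
      ∃ s ∉ P, s • (1 - A₀.det) ∈ detVariationIdeal v A₀ := by
    intro P hP
    obtain ⟨g, hg⟩ := hloccyc P hP
    obtain ⟨B, hB, hBdet⟩ := exists_columnCombination_eq_det_sub_one_mem_of_span_singleton_eq_top
      hg (LocalizedModule.span_range_mkLinearMap_comp_eq_top _ hv)
      (LocalizedModule.span_range_mkLinearMap_comp_eq_top _ hw)
    obtain ⟨s, hs, A, hA, hAdet⟩ :=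
      exists_columnCombination_eq_smul_of_localization _ hv hB hBdet
    exact ⟨s ^ 2, fun h => hs (hP.isPrime.mem_of_pow_mem 2 h),
      sq_mul_one_sub_det_mem_detVariationIdeal hv hA hAdet⟩
  obtain ⟨A, hA, hAdet⟩ := exists_columnCombination_eq_det_sub_one_mem_of_one_sub_det_mem hv
    (Submodule.mem_of_forall_isMaximal_exists_smul_mem hlocal)
  obtain ⟨σ, hσ⟩ := exists_specialLinearGroup_sub_mem_of_det_sub_one_mem hsurj hAdet
  refine ⟨σ, fun j => ?_⟩
  rw [← hA, ← columnCombination_eq_of_sub_mem_annihilator v hσ]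
  rfl

/-- If `M` is a two-generated locally cyclic module and
`SL₂(R) → SL₂(R/ann(M))` is surjective, then `SL₂(R)` acts transitively on
generating pairs of `M`. -/
theorem sl2_transitive_of_locally_cyclic {R M : Type*} [CommRing R] [AddCommGroup M]
    [Module R M]
    (htwo : ∃ a b : M, Submodule.span R {a, b} = ⊤)
    (hloccyc : ∀ (p : Ideal R) (_ : p.IsMaximal),
      ∃ g : LocalizedModule p.primeCompl M,
        Submodule.span (Localization p.primeCompl) {g} = ⊤)
    (hsurj : Function.Surjective
      (Matrix.SpecialLinearGroup.map (n := Fin 2)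
        (Ideal.Quotient.mk ((⊤ : Submodule R M).annihilator))))
    (v w : Fin 2 → M)
    (hv : Submodule.span R (Set.range v) = ⊤)
    (hw : Submodule.span R (Set.range w) = ⊤) :
    ∃ σ : Matrix.SpecialLinearGroup (Fin 2) R,
      ∀ j, w j = ∑ i, (σ : Matrix (Fin 2) (Fin 2) R) i j • v i :=
  sl2_transitive_of_locally_cyclic_general hloccyc hsurj v w hv hw
end

section
/- Let I be an ideal of a commutative ring R generated by two regular elements a and b. Then the second Fitting ideal Fitt₁(I) equals I·I⁻¹, where I⁻¹ = {x ∈ K(R) : xI ⊆ R} and K(R) is the total ring of quotients of R. -/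
/-!
Elements `x ∈ I⁻¹` correspond to relations: `x a = r` and `x b = s` lie in `R` and satisfy
`r b = s a`, so `a x = r` and `b x = s` are coefficients of a relation. Conversely, a relation
`r a + s b = 0` yields `x = -s / a ∈ I⁻¹` (as `x a = -s` and `x b = r`), whence
`r = b x` and `s = a (-x)` lie in `I I⁻¹`.
-/

/-- The second Fitting ideal of the ideal generated by `a` and `b`, computed from the
presentation associated with the generating pair `(a, b)`: it is the ideal generated by
all coefficients involved in a relation `r * a + s * b = 0`. -/
def relFittingIdeal {R : Type*} [CommRing R] (a b : R) : Ideal R :=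
  Ideal.span {r : R | (∃ s, r * a + s * b = 0) ∨ (∃ s, s * a + r * b = 0)}

namespace Submodule

variable {R A : Type*} [CommSemiring R] [CommSemiring A] [Algebra R A]

theorem mem_div_span_iff {P : Submodule R A} {s : Set A} {x : A} :
    x ∈ P / span R s ↔ ∀ y ∈ s, x * y ∈ P :=
  ⟨fun h y hy ↦ h y (subset_span hy),
    fun h _ hy ↦ (span_le (p := P.comap (LinearMap.mulLeft R x))).mpr h hy⟩

theorem mem_div_span_pair_iff {P : Submodule R A} {u v x : A} :
    x ∈ P / span R {u, v} ↔ x * u ∈ P ∧ x * v ∈ P := by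
  simp only [mem_div_span_iff, Set.forall_mem_insert, Set.mem_singleton_iff, forall_eq]

end Submodule

open Submodule

section

variable {R S : Type*} [CommRing R] [CommRing S] [Algebra R S] {a b : R}

theorem map_ideal_span_pair :
    map (Algebra.linearMap R S) (Ideal.span {a, b}) =
      span R {algebraMap R S a, algebraMap R S b} := by
  rw [Ideal.span, map_span, Set.image_pair]
  rfl

theorem algebraMap_mem_span_pair_mul_one_div_of_mul_add_mul_eq_zero
    (ha : IsUnit (algebraMap R S a)) {r s : R} (h : r * a + s * b = 0) :
    algebraMap R S r ∈ span R {algebraMap R S a, algebraMap R S b} *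
        (1 / span R {algebraMap R S a, algebraMap R S b}) ∧
      algebraMap R S s ∈ span R {algebraMap R S a, algebraMap R S b} *
        (1 / span R {algebraMap R S a, algebraMap R S b}) := by
  set J := span R {algebraMap R S a, algebraMap R S b}
  obtain ⟨c, hc⟩ := ha.exists_left_inv
  have hrel :
      algebraMap R S r * algebraMap R S a + algebraMap R S s * algebraMap R S b = 0 := by
    simpa only [map_add, map_mul, map_zero] using congrArg (algebraMap R S) h
  set x := -(c * algebraMap R S s)
  have hxa : x * algebraMap R S a = algebraMap R S (-s) := by
    rw [map_neg]; linear_combination (-algebraMap R S s) * hc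
  have hxb : x * algebraMap R S b = algebraMap R S r := by
    linear_combination -c * hrel + algebraMap R S r * hc
  have hx : x ∈ 1 / J :=
    mem_div_span_pair_iff.mpr ⟨mem_one.mpr ⟨-s, hxa.symm⟩, mem_one.mpr ⟨r, hxb.symm⟩⟩
  have haJ : algebraMap R S a ∈ J := subset_span (by simp)
  have hbJ : algebraMap R S b ∈ J := subset_span (by simp)
  constructor
  · rw [← hxb, mul_comm]
    exact mul_mem_mul hx hbJ
  · have hs : algebraMap R S a * -x = algebraMap R S s := by
      rw [mul_neg, mul_comm, hxa, map_neg, neg_neg]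
    rw [← hs]
    exact mul_mem_mul haJ (neg_mem hx)

theorem map_relFittingIdeal_le_span_pair_mul_one_div (ha : IsUnit (algebraMap R S a)) :
    map (Algebra.linearMap R S) (relFittingIdeal a b) ≤
      span R {algebraMap R S a, algebraMap R S b} *
        (1 / span R {algebraMap R S a, algebraMap R S b}) := by
  rw [relFittingIdeal, Ideal.span, map_span, span_le]
  rintro _ ⟨r, ⟨s, h⟩ | ⟨s, h⟩, rfl⟩
  · exact (algebraMap_mem_span_pair_mul_one_div_of_mul_add_mul_eq_zero ha h).1
  · exact (algebraMap_mem_span_pair_mul_one_div_of_mul_add_mul_eq_zero ha h).2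

theorem span_pair_mul_one_div_le_map_relFittingIdeal
    (hinj : Function.Injective (algebraMap R S)) :
    span R {algebraMap R S a, algebraMap R S b} *
        (1 / span R {algebraMap R S a, algebraMap R S b}) ≤
      map (Algebra.linearMap R S) (relFittingIdeal a b) := by
  rw [mul_comm, ← Submodule.le_div_iff_mul_le]
  intro x hx
  obtain ⟨⟨r, hr⟩, ⟨s, hs⟩⟩ := (mem_div_span_pair_iff.mp hx).imp mem_one.mp mem_one.mp
  have hrel : r * b = s * a := hinj <| by
    rw [map_mul, map_mul, hr, hs]; ring
  refine mem_div_span_pair_iff.mpr ⟨⟨r, Ideal.subset_span (Or.inr ⟨-s, ?_⟩), hr⟩,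
    ⟨s, Ideal.subset_span (Or.inl ⟨-r, ?_⟩), hs⟩⟩
  · linear_combination hrel
  · linear_combination -hrel

theorem map_relFittingIdeal_eq_span_pair_mul_one_div
    (hinj : Function.Injective (algebraMap R S)) (ha : IsUnit (algebraMap R S a)) :
    map (Algebra.linearMap R S) (relFittingIdeal a b) =
      span R {algebraMap R S a, algebraMap R S b} *
        (1 / span R {algebraMap R S a, algebraMap R S b}) :=
  le_antisymm (map_relFittingIdeal_le_span_pair_mul_one_div ha)
    (span_pair_mul_one_div_le_map_relFittingIdeal hinj)

end

theorem fittingIdeal_eq_mul_inv_general {R : Type*} [CommRing R] (a b : R)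
    (ha : a ∈ nonZeroDivisors R)
    (I : Ideal R) (hI : I = Ideal.span {a, b}) :
    Submodule.map (Algebra.linearMap R (FractionRing R)) (relFittingIdeal a b) =
      Submodule.map (Algebra.linearMap R (FractionRing R)) I *
        ((1 : Submodule R (FractionRing R)) /
          Submodule.map (Algebra.linearMap R (FractionRing R)) I) := by
  subst hI
  rw [map_ideal_span_pair]
  exact map_relFittingIdeal_eq_span_pair_mul_one_div (IsFractionRing.injective R _)
    (IsLocalization.map_units _ ⟨a, ha⟩)

/-- If `I` is an ideal generated by two regular elements `a`, `b`, then
`Fitt₁(I) = I · I⁻¹`, where `I⁻¹ = {x ∈ K(R) | x I ⊆ R}` and `K(R)` is the total ring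
of quotients (the equality is stated between the corresponding `R`-submodules of `K(R)`;
note `R → K(R)` is injective). -/
theorem fittingIdeal_eq_mul_inv {R : Type*} [CommRing R] (a b : R)
    (ha : a ∈ nonZeroDivisors R) (hb : b ∈ nonZeroDivisors R)
    (I : Ideal R) (hI : I = Ideal.span {a, b}) :
    Submodule.map (Algebra.linearMap R (FractionRing R)) (relFittingIdeal a b) =
      Submodule.map (Algebra.linearMap R (FractionRing R)) I *
        ((1 : Submodule R (FractionRing R)) /
          Submodule.map (Algebra.linearMap R (FractionRing R)) I) :=
  fittingIdeal_eq_mul_inv_general a b ha I hI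
end

section
/- Let I be a two-generated ideal of a commutative ring R with Fitt₁(I) = I·I⁻¹ (e.g., I generated by two regular elements). Let m, m' be generating pairs of I. Then m ∼_{SL₂(R)} m' if and only if det_m(m') = 1 in R/Fitt₁(I). Consequently the determinant map induces an injection of V₂(I)/SL₂(R) into (R/Fitt₁(I))^×. -/
/-!
Matrices in `SL₂(R)` have determinant `1`, so only the converse needs an argument. If `A`
carries `v` to `w`, so does `A + N` whenever `v ᵥ* N = 0`. Write `1 - det A ∈ Fitt₁(I) = I · I⁻¹`
as `w₀ t + w₁ s` with `t, s ∈ I⁻¹`. The rank-one matrix `N = (v₁, -v₀)ᵀ (s, -t)` has entries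
in `R` because `v₀, v₁ ∈ I`, it is killed by `v`, and `det (A + N) = det A + w₀ t + w₁ s = 1`.
-/

open Matrix Submodule

section

variable {R K : Type*} [CommSemiring R] [CommSemiring K] [Algebra R K]

theorem Submodule.exists_eq_add_of_mem_span_pair_mul {P : Submodule R K} {x y z : K}
    (hz : z ∈ span R {x, y} * P) : ∃ t ∈ P, ∃ s ∈ P, z = x * t + y * s := by
  rw [span_insert, sup_mul, mem_sup] at hz
  obtain ⟨_, hx, _, hy, rfl⟩ := hz
  obtain ⟨t, ht, rfl⟩ := mem_span_singleton_mul.1 hx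
  obtain ⟨s, hs, rfl⟩ := mem_span_singleton_mul.1 hy
  exact ⟨t, ht, s, hs, rfl⟩

theorem exists_algebraMap_eq_mul_of_mem_one_div {I : Ideal R} {t : K}
    (ht : t ∈ 1 / Submodule.map (Algebra.linearMap R K) I) {r : R} (hr : r ∈ I) :
    ∃ a, algebraMap R K a = t * algebraMap R K r :=
  mem_one.1 (mem_div_iff_forall_mul_mem.1 ht _ (mem_map_of_mem hr))

end

theorem exists_vecMul_eq_and_det_eq_add {R K : Type*} [CommRing R] [CommRing K] [Algebra R K]
    (hf : Function.Injective (algebraMap R K))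
    {I : Ideal R} {v : Fin 2 → R} (hv : ∀ i, v i ∈ I) (A : Matrix (Fin 2) (Fin 2) R)
    (hA : Ideal.span {(v ᵥ* A) 0, (v ᵥ* A) 1} = I) {δ : R}
    (hδ : algebraMap R K δ ∈
      Submodule.map (Algebra.linearMap R K) I * (1 / Submodule.map (Algebra.linearMap R K) I)) :
    ∃ B : Matrix (Fin 2) (Fin 2) R, v ᵥ* B = v ᵥ* A ∧ B.det = A.det + δ := by
  nth_rw 1 [← hA] at hδ
  rw [Ideal.span, map_span, Set.image_pair] at hδ
  obtain ⟨t, ht, s, hs, hδ⟩ := exists_eq_add_of_mem_span_pair_mul hδ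
  obtain ⟨a, ha⟩ := exists_algebraMap_eq_mul_of_mem_one_div hs (hv 1)
  obtain ⟨b, hb⟩ := exists_algebraMap_eq_mul_of_mem_one_div hs (hv 0)
  obtain ⟨c, hc⟩ := exists_algebraMap_eq_mul_of_mem_one_div ht (hv 1)
  obtain ⟨d, hd⟩ := exists_algebraMap_eq_mul_of_mem_one_div ht (hv 0)
  have hab : v 0 * a = v 1 * b := hf (by simp only [map_mul, ha, hb]; ring)
  have hcd : v 0 * c = v 1 * d := hf (by simp only [map_mul, hc, hd]; ring)
  refine ⟨A + !![a, -c; -b, d], ?_, hf ?_⟩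
  · rw [vecMul_add, add_eq_left]
    ext j
    fin_cases j <;> simp [vecMul, dotProduct, Fin.sum_univ_two, hab, hcd]
  · simp only [vecMul, vec2_dotProduct, Algebra.linearMap_apply, map_add, map_mul] at hδ
    simp only [det_fin_two, Matrix.add_apply, of_apply, cons_val', cons_val_zero, cons_val_one,
      empty_val', cons_val_fin_one, map_add, map_sub, map_mul, map_neg, ha, hb, hc, hd, hδ]
    ring

theorem Matrix.vecMul_eq_iff_forall_eq_sum {R n : Type*} [CommSemiring R] [Fintype n]
    {A : Matrix n n R} {v w : n → R} : v ᵥ* A = w ↔ ∀ j, w j = ∑ i, A i j * v i := by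
  simp only [funext_iff, vecMul, dotProduct, mul_comm, eq_comm]

/-- Let `I` be a two-generated ideal with `Fitt₁(I) = I · I⁻¹`
(stated in the total quotient ring `K(R) = FractionRing R`). Two generating pairs
`v, w` of `I` are `SL₂(R)`-equivalent iff `det_v(w) = 1`, i.e. iff some matrix `A`
carries `v` to `w` with `det A ≡ 1 mod Fitt₁(I)`.  Consequently the determinant map
induces an injection of `V₂(I)/SL₂(R)` into `(R/Fitt₁(I))ˣ`. -/
theorem sl2_orbit_iff_det_one {R : Type*} [CommRing R] (I : Ideal R)
    (v w : Fin 2 → R)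
    (hv : Ideal.span {v 0, v 1} = I) (hw : Ideal.span {w 0, w 1} = I)
    (hFitt : Submodule.map (Algebra.linearMap R (FractionRing R))
        (relFittingIdeal (v 0) (v 1)) =
      Submodule.map (Algebra.linearMap R (FractionRing R)) I *
        ((1 : Submodule R (FractionRing R)) /
          Submodule.map (Algebra.linearMap R (FractionRing R)) I)) :
    (∃ σ : Matrix.SpecialLinearGroup (Fin 2) R,
        ∀ j, w j = ∑ i, (σ : Matrix (Fin 2) (Fin 2) R) i j * v i) ↔
      (∃ A : Matrix (Fin 2) (Fin 2) R,
        (∀ j, w j = ∑ i, A i j * v i) ∧ A.det - 1 ∈ relFittingIdeal (v 0) (v 1)) := by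
  constructor
  · rintro ⟨σ, hσ⟩
    exact ⟨σ, hσ, by simp [σ.det_coe]⟩
  · rintro ⟨A, hA, hdet⟩
    rw [← vecMul_eq_iff_forall_eq_sum] at hA
    have hvI : ∀ i, v i ∈ I := fun i => hv ▸ Ideal.subset_span (by fin_cases i <;> simp)
    have hδ : 1 - A.det ∈ relFittingIdeal (v 0) (v 1) := by
      simpa using neg_mem hdet
    obtain ⟨B, hB, hBdet⟩ := exists_vecMul_eq_and_det_eq_add (δ := 1 - A.det)
      (IsFractionRing.injective R (FractionRing R)) hvI A (hA ▸ hw) (hFitt ▸ mem_map_of_mem hδ)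
    refine ⟨⟨B, by rw [hBdet, add_sub_cancel]⟩, ?_⟩
    rw [← vecMul_eq_iff_forall_eq_sum, ← hA, ← hB]
end

section
/- Let I be a two-generated ideal of R, m, m' generating pairs of I with mA = m' for a 2×2 matrix A over R, and let N_m be the set of 2×2 matrices N over R with mN = (0,0). Define Φ_A(N) = det(A+N) − det(A). Then I·I⁻¹ ⊆ Φ_A(N_m) ⊆ Fitt₁(I), and if I is faithful then Φ_A(N_m) is an ideal of R. -/
open Matrix

namespace Matrix

variable {R : Type*} [CommRing R]

theorem det_add_fin_two (A N : Matrix (Fin 2) (Fin 2) R) :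
    (A + N).det = A.det + (A.adjugate * N).trace + N.det := by
  simp only [det_fin_two, adjugate_fin_two, trace_fin_two, add_apply, mul_apply,
    Fin.sum_univ_two, of_apply, cons_val', cons_val_zero, cons_val_one, empty_val',
    cons_val_fin_one]
  ring

theorem vecMul_adjugate_vecMulVec_fin_two (q u : Fin 2 → R) :
    u ᵥ* adjugate (vecMulVec q u) = 0 := by
  ext j
  fin_cases j <;>
  · simp only [vecMul, dotProduct, Fin.zero_eta, Fin.mk_one, adjugate_fin_two, vecMulVec_apply,
      of_apply, cons_val', cons_val_zero, cons_val_one, cons_val_fin_one, Fin.sum_univ_two,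
      Pi.zero_apply]
    ring

theorem det_add_adjugate_vecMulVec_fin_two (A : Matrix (Fin 2) (Fin 2) R) (q u : Fin 2 → R) :
    (A + adjugate (vecMulVec q u)).det - A.det = q ⬝ᵥ (u ᵥ* A) := by
  simp only [det_fin_two, adjugate_fin_two, vecMulVec_apply, add_apply, of_apply, cons_val',
    cons_val_zero, cons_val_one, cons_val_fin_one, dotProduct, vecMul, Fin.sum_univ_two]
  ring

theorem det_smul_eq_zero_of_vecMul_eq_zero {n : Type*} [Fintype n] [DecidableEq n]
    {v : n → R} {N : Matrix n n R} (h : v ᵥ* N = 0) : N.det • v = 0 := by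
  rw [← vecMul_one v, ← vecMul_smul, ← mul_adjugate, ← vecMul_vecMul, h, zero_vecMul]

theorem det_add_sub_det_mem {n : Type*} [Fintype n] [DecidableEq n] (J : Ideal R)
    (A : Matrix n n R) {N : Matrix n n R} (hN : ∀ i j, N i j ∈ J) :
    (A + N).det - A.det ∈ J := by
  rw [← Ideal.Quotient.eq, RingHom.map_det, RingHom.map_det, map_add]
  have hN0 : (Ideal.Quotient.mk J).mapMatrix N = 0 := by
    ext i j
    exact Ideal.Quotient.eq_zero_iff_mem.2 (hN i j)
  rw [hN0, add_zero]

end Matrix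

namespace Submodule

theorem exists_of_mem_span_pair_mul {R A : Type*} [CommSemiring R] [Semiring A] [Algebra R A]
    {a b t : A} {P : Submodule R A} (ht : t ∈ span R {a, b} * P) :
    ∃ x ∈ P, ∃ y ∈ P, a * x + b * y = t := by
  rw [span_insert, sup_mul, mem_sup] at ht
  obtain ⟨_, ha, _, hb, rfl⟩ := ht
  obtain ⟨x, hx, rfl⟩ := mem_span_singleton_mul.1 ha
  obtain ⟨y, hy, rfl⟩ := mem_span_singleton_mul.1 hb
  exact ⟨x, hx, y, hy, rfl⟩

end Submodule

section RelationMatrices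

variable {R : Type*} [CommRing R] {m : Type*} [Fintype m]

def relationMatrices (n : Type*) (v : m → R) : Submodule R (Matrix m n R) where
  carrier := {N | v ᵥ* N = 0}
  add_mem' {N N'} hN hN' := by simp_all [vecMul_add]
  zero_mem' := vecMul_zero v
  smul_mem' c N hN := by simp_all [vecMul_smul]

variable {n : Type*} {v : m → R} {N : Matrix m n R}

theorem mem_relationMatrices_iff_sum :
    N ∈ relationMatrices n v ↔ ∀ j, ∑ i, N i j * v i = 0 := by
  simp [relationMatrices, funext_iff, vecMul, dotProduct, mul_comm]

end RelationMatrices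

section TwoGenerated

variable {R : Type*} [CommRing R] {v : Fin 2 → R}

theorem apply_mem_relFittingIdeal {N : Matrix (Fin 2) (Fin 2) R}
    (hN : N ∈ relationMatrices (Fin 2) v) (i j : Fin 2) :
    N i j ∈ relFittingIdeal (v 0) (v 1) := by
  have hj : N 0 j * v 0 + N 1 j * v 1 = 0 := by
    simpa [Fin.sum_univ_two] using mem_relationMatrices_iff_sum.1 hN j
  apply Ideal.subset_span
  fin_cases i
  exacts [Or.inl ⟨N 1 j, hj⟩, Or.inr ⟨N 0 j, hj⟩]

theorem coe_map_trace_adjugate_mul_relationMatrices (A : Matrix (Fin 2) (Fin 2) R)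
    (hdet : ∀ N ∈ relationMatrices (Fin 2) v, N.det = 0) :
    ((relationMatrices (Fin 2) v).map
        (traceLinearMap (Fin 2) R R ∘ₗ LinearMap.mulLeft R A.adjugate) : Set R) =
      {r | ∃ N, N ∈ relationMatrices (Fin 2) v ∧ (A + N).det - A.det = r} := by
  ext r
  rw [SetLike.mem_coe, Submodule.mem_map]
  refine exists_congr fun N => and_congr_right fun hN => ?_
  change (A.adjugate * N).trace = r ↔ _
  rw [det_add_fin_two, hdet N hN, add_zero, add_sub_cancel_left]

theorem exists_mem_relationMatrices_of_mul_mem_range {K : Type*} [CommRing K] [Algebra R K]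
    (hf : Function.Injective (algebraMap R K)) (A : Matrix (Fin 2) (Fin 2) R) {q : Fin 2 → K}
    (hq : ∀ i j, q j * algebraMap R K (v i) ∈ Set.range (algebraMap R K)) :
    ∃ N ∈ relationMatrices (Fin 2) v,
      algebraMap R K ((A + N).det - A.det) = q ⬝ᵥ (algebraMap R K ∘ (v ᵥ* A)) := by
  set f := algebraMap R K
  choose B hB using fun j i => hq i j
  have hN : f.mapMatrix (adjugate (of B)) = adjugate (vecMulVec q (f ∘ v)) := by
    rw [f.map_adjugate]
    congr
    ext j i
    exact hB j i
  refine ⟨adjugate (of B), ?_, ?_⟩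
  · ext j
    apply hf
    rw [RingHom.map_vecMul, Pi.zero_apply, map_zero]
    exact congrFun (hN ▸ vecMul_adjugate_vecMulVec_fin_two q (f ∘ v)) j
  · rw [map_sub, RingHom.map_det, RingHom.map_det, map_add, hN,
      det_add_adjugate_vecMulVec_fin_two]
    congr 1
    ext j
    exact (RingHom.map_vecMul f A v j).symm

theorem det_eq_zero_of_mem_relationMatrices
    (hv : ∀ r : R, (∀ x ∈ Ideal.span {v 0, v 1}, r * x = 0) → r = 0)
    {N : Matrix (Fin 2) (Fin 2) R} (hN : N ∈ relationMatrices (Fin 2) v) : N.det = 0 := by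
  refine hv _ fun x hx => ?_
  obtain ⟨a, b, rfl⟩ := Ideal.mem_span_pair.1 hx
  have h := det_smul_eq_zero_of_vecMul_eq_zero hN
  have h0 : N.det * v 0 = 0 := congrFun h 0
  have h1 : N.det * v 1 = 0 := congrFun h 1
  linear_combination a * h0 + b * h1

theorem exists_mem_relationMatrices_of_mem_mul_one_div {K : Type*} [CommRing K] [Algebra R K]
    (hf : Function.Injective (algebraMap R K)) {I : Ideal R} {w : Fin 2 → R}
    (hvI : ∀ i, v i ∈ I) (hw : Ideal.span {w 0, w 1} = I) (A : Matrix (Fin 2) (Fin 2) R)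
    (hA : v ᵥ* A = w) {r : R}
    (hr : algebraMap R K r ∈
      Submodule.map (Algebra.linearMap R K) I * (1 / Submodule.map (Algebra.linearMap R K) I)) :
    ∃ N ∈ relationMatrices (Fin 2) v, (A + N).det - A.det = r := by
  have hM : Submodule.map (Algebra.linearMap R K) I =
      Submodule.span R {algebraMap R K (w 0), algebraMap R K (w 1)} := by
    rw [← hw, Ideal.span, Submodule.map_span, Set.image_pair]
    rfl
  nth_rw 1 [hM] at hr
  obtain ⟨x, hx, y, hy, hxy⟩ := Submodule.exists_of_mem_span_pair_mul hr
  have hq : ∀ i j, ![x, y] j * algebraMap R K (v i) ∈ Set.range (algebraMap R K) :=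
    fun i j => Submodule.mem_one.1 <| Submodule.mem_div_iff_forall_mul_mem.1
      (by fin_cases j <;> assumption) _ (Submodule.mem_map_of_mem (hvI i))
  obtain ⟨N, hN, hNr⟩ := exists_mem_relationMatrices_of_mul_mem_range hf A hq
  refine ⟨N, hN, hf ?_⟩
  rw [hNr, hA, ← hxy]
  simp [dotProduct, Fin.sum_univ_two, mul_comm]

end TwoGenerated

/-- Let `v, w` be generating pairs of a two-generated ideal `I`, and `A`
a matrix with `v A = w`. Let `𝒩_v` be the set of matrices `N` with `v N = 0`, and
`Φ_A(N) = det (A + N) - det A`. Then `I · I⁻¹ ⊆ Φ_A(𝒩_v) ⊆ Fitt₁(I)` (the left-hand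
inclusion stated in the total quotient ring `K(R)`), and if `I` is faithful then
`Φ_A(𝒩_v)` is an ideal of `R`. -/
theorem phi_between_mul_inv_and_fitting {R : Type*} [CommRing R] (I : Ideal R)
    (v w : Fin 2 → R)
    (hv : Ideal.span {v 0, v 1} = I) (hw : Ideal.span {w 0, w 1} = I)
    (A : Matrix (Fin 2) (Fin 2) R) (hA : ∀ j, w j = ∑ i, A i j * v i) :
    (∀ r : R,
        algebraMap R (FractionRing R) r ∈
          Submodule.map (Algebra.linearMap R (FractionRing R)) I *
            ((1 : Submodule R (FractionRing R)) /
              Submodule.map (Algebra.linearMap R (FractionRing R)) I) →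
        ∃ N : Matrix (Fin 2) (Fin 2) R,
          (∀ j, (∑ i, N i j * v i) = 0) ∧ (A + N).det - A.det = r) ∧
    (∀ N : Matrix (Fin 2) (Fin 2) R, (∀ j, (∑ i, N i j * v i) = 0) →
        (A + N).det - A.det ∈ relFittingIdeal (v 0) (v 1)) ∧
    ((∀ r : R, (∀ x ∈ I, r * x = 0) → r = 0) →
      ∃ J : Ideal R, (J : Set R) =
        {r : R | ∃ N : Matrix (Fin 2) (Fin 2) R,
          (∀ j, (∑ i, N i j * v i) = 0) ∧ (A + N).det - A.det = r}) := by
  have hf := IsFractionRing.injective R (FractionRing R)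
  have hvI : ∀ i, v i ∈ I := fun i => hv ▸ Ideal.subset_span (by fin_cases i <;> simp)
  have hwA : v ᵥ* A = w := by
    ext j
    simp [vecMul, dotProduct, hA j, mul_comm]
  refine ⟨fun r hr => ?_, fun N hN => ?_, fun hI => ?_⟩
  · obtain ⟨N, hN, rfl⟩ := exists_mem_relationMatrices_of_mem_mul_one_div hf hvI hw A hwA hr
    exact ⟨N, mem_relationMatrices_iff_sum.1 hN, rfl⟩
  · exact det_add_sub_det_mem _ A (apply_mem_relFittingIdeal (mem_relationMatrices_iff_sum.2 hN))
  · have hdet N (hN : N ∈ relationMatrices (Fin 2) v) : N.det = 0 :=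
      det_eq_zero_of_mem_relationMatrices (hv ▸ hI) hN
    have hJ := coe_map_trace_adjugate_mul_relationMatrices A hdet
    simp only [mem_relationMatrices_iff_sum] at hJ
    exact ⟨_, hJ⟩
end

section
/- Let I be a two-generated ideal of R and suppose there exists a generating pair (a,b) of I such that the natural group homomorphism (R/(a:b))^× → (R/Fitt₁(I))^× is surjective, where (a:b) = {r ∈ R : rb ∈ Ra}. Then the map det_{(a,b)}: V₂(I) → (R/Fitt₁(I))^× is surjective. -/
namespace Ideal

theorem mem_span_pair_mul_of_isUnit_mk_colon {R : Type*} [CommRing R] {a b r : R}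
    (hr : IsUnit (Quotient.mk ((span {a}).colon (span {b})) r)) :
    b ∈ span {a, r * b} := by
  obtain ⟨y, hy⟩ := isUnit_iff_exists_inv.mp hr
  obtain ⟨s, rfl⟩ := Quotient.mk_surjective y
  have hmem : r * s - 1 ∈ (span {a}).colon (span {b}) := by
    rw [← Quotient.eq_zero_iff_mem, map_sub, map_mul, hy, map_one, sub_self]
  obtain ⟨c, hc⟩ := mem_span_singleton'.mp (mem_colon_span_singleton.mp hmem)
  exact mem_span_pair.mpr ⟨-c, s, by linear_combination -hc⟩

theorem span_pair_mul_eq_of_isUnit_mk_colon {R : Type*} [CommRing R] {a b r : R}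
    (hr : IsUnit (Quotient.mk ((span {a}).colon (span {b})) r)) :
    span {a, r * b} = span {a, b} := by
  refine le_antisymm (span_le.mpr ?_) (span_le.mpr ?_) <;>
    rintro x (rfl | rfl)
  · exact subset_span (by simp)
  · exact mul_mem_left _ r (subset_span (by simp))
  · exact subset_span (by simp)
  · exact mem_span_pair_mul_of_isUnit_mk_colon hr

end Ideal

/-- Let `(a, b)` be a generating pair of a two-generated ideal `I` such
that `(R/(a:b))ˣ → (R/Fitt₁(I))ˣ` is surjective (every unit of `R/Fitt₁(I)` lifts to an
element of `R` whose class mod `(a : b)` is a unit).  Then the determinant map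
`det_{(a,b)} : V₂(I) → (R/Fitt₁(I))ˣ` is surjective: every unit is `det A mod Fitt₁(I)`
for some matrix `A` carrying `(a, b)` to another generating pair of `I`. -/
theorem det_map_surjective {R : Type*} [CommRing R] (I : Ideal R) (a b : R)
    (hab : Ideal.span {a, b} = I)
    (hsurj : ∀ u : (R ⧸ relFittingIdeal a b)ˣ, ∃ r : R,
      Ideal.Quotient.mk (relFittingIdeal a b) r = (u : R ⧸ relFittingIdeal a b) ∧
      IsUnit (Ideal.Quotient.mk ((Ideal.span {a}).colon (Ideal.span {b})) r)) :
    ∀ u : (R ⧸ relFittingIdeal a b)ˣ,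
      ∃ (w : Fin 2 → R) (A : Matrix (Fin 2) (Fin 2) R),
        Ideal.span {w 0, w 1} = I ∧
        (∀ j, w j = ∑ i, A i j * ![a, b] i) ∧
        Ideal.Quotient.mk (relFittingIdeal a b) A.det = (u : R ⧸ relFittingIdeal a b) := by
  intro u
  obtain ⟨r, hru, hr⟩ := hsurj u
  refine ⟨![a, r * b], !![1, 0; 0, r], ?_, ?_, ?_⟩
  · simpa [hab] using Ideal.span_pair_mul_eq_of_isUnit_mk_colon hr
  · intro j
    fin_cases j <;> simp [Fin.sum_univ_two]
  · simpa [Matrix.det_fin_two_of] using hru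
end

section
/- Let R be a commutative ring such that R/Rr has stable rank 1 for every regular element r ∈ R (R is almost of stable rank 1), and let I be an ideal of R generated by two regular elements. Then the determinant map induces a bijection from V₂(I)/SL₂(R) onto (R/Fitt₁(I))^×. -/
/-!
Write `F₁ = (b) : a` and `F₂ = (a) : b`, so that `Fitt₁(I) = F₁ + F₂`. Two matrices carrying
`(a, b)` to the same pair differ by a matrix with entries in `Fitt₁(I)`, so the determinant class
is `SL₂(R)`-invariant. Conversely, using stable rank one of `R/F₁` and of `R/(b)`, every
generating pair is equivalent to a normal form `(p a + q b, b)` of determinant `p`, and `p` is a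
unit modulo `F₁`. Two normal forms with `p ≡ p'` modulo `F₁ + F₂` are related by an explicit
matrix: the `F₂`-part of `p' - p` is absorbed using inverses of `p` and `p'` modulo `F₁` and
regularity of `b`, the `F₁`-part by an elementary move. For surjectivity, stable rank one of
`R/F₂` moves a unit `c` modulo `F₁ + F₂` within its class to a unit `v` modulo `F₂`, and then
`(a, v b)` generates `I`.
-/

open Matrix

def HasStableRankOne (S : Type*) [CommRing S] : Prop :=
  ∀ x y : S, Ideal.span {x, y} = ⊤ → ∃ t : S, IsUnit (x + t * y)

def IsAlmostStableRankOne (S : Type*) [CommRing S] : Prop :=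
  ∀ r ∈ nonZeroDivisors S, HasStableRankOne (S ⧸ Ideal.span {r})

theorem HasStableRankOne.of_surjective {S T : Type*} [CommRing S] [CommRing T]
    (h : HasStableRankOne S) (f : S →+* T) (hf : Function.Surjective f) :
    HasStableRankOne T := by
  intro x y hxy
  obtain ⟨α, β, hαβ⟩ := Ideal.mem_span_pair.mp ((Ideal.eq_top_iff_one _).mp hxy)
  obtain ⟨x, rfl⟩ := hf x
  obtain ⟨α, rfl⟩ := hf α
  -- `(x, 1 - α x)` is unimodular upstairs, and `1 - α x` maps to `β y`.
  obtain ⟨t, ht⟩ := h x (1 - α * x) <| (Ideal.eq_top_iff_one _).mpr <|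
    Ideal.mem_span_pair.mpr ⟨α, 1, by ring⟩
  refine ⟨f t * β, ?_⟩
  convert ht.map f using 1
  simp only [map_add, map_mul, map_sub, map_one]
  linear_combination f t * hαβ

section

variable {R : Type*} [CommRing R]

theorem IsAlmostStableRankOne.hasStableRankOne_quotient (hR : IsAlmostStableRankOne R)
    {K : Ideal R} {r : R} (hr : r ∈ nonZeroDivisors R) (hrK : r ∈ K) :
    HasStableRankOne (R ⧸ K) :=
  (hR r hr).of_surjective _ <|
    Ideal.Quotient.factor_surjective ((Ideal.span_singleton_le_iff_mem K).mpr hrK)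

theorem HasStableRankOne.exists_add_mul_mul_sub_one_mem {K : Ideal R}
    (h : HasStableRankOne (R ⧸ K)) {x y α β : R} (hxy : α * x + β * y - 1 ∈ K) :
    ∃ t c : R, (x + t * y) * c - 1 ∈ K := by
  have hunimod : Ideal.span {Ideal.Quotient.mk K x, Ideal.Quotient.mk K y} = ⊤ := by
    refine (Ideal.eq_top_iff_one _).mpr <|
      Ideal.mem_span_pair.mpr ⟨Ideal.Quotient.mk K α, Ideal.Quotient.mk K β, ?_⟩
    rw [← sub_eq_zero, ← map_mul, ← map_mul, ← map_add, ← map_one (Ideal.Quotient.mk K),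
      ← map_sub, Ideal.Quotient.eq_zero_iff_mem]
    exact hxy
  obtain ⟨t, ht⟩ := h _ _ hunimod
  obtain ⟨t, rfl⟩ := Ideal.Quotient.mk_surjective t
  obtain ⟨c, hc⟩ := ht.exists_right_inv
  obtain ⟨c, rfl⟩ := Ideal.Quotient.mk_surjective c
  refine ⟨t, c, Ideal.Quotient.eq_zero_iff_mem.mp ?_⟩
  simpa only [map_sub, map_mul, map_add, map_one, sub_eq_zero] using hc

theorem mem_colon_span_singleton_iff {a b r : R} :
    r ∈ (Ideal.span {b}).colon {a} ↔ ∃ s, r * a + s * b = 0 := by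
  rw [Submodule.mem_colon_singleton, smul_eq_mul, Ideal.mem_span_singleton']
  exact ⟨fun ⟨s, hs⟩ => ⟨-s, by linear_combination -hs⟩,
    fun ⟨s, hs⟩ => ⟨-s, by linear_combination -hs⟩⟩

theorem relFittingIdeal_eq_colon_sup_colon (a b : R) :
    relFittingIdeal a b = (Ideal.span {b}).colon {a} ⊔ (Ideal.span {a}).colon {b} := by
  apply le_antisymm
  · rw [relFittingIdeal, Ideal.span_le]
    rintro r (⟨s, hs⟩ | ⟨s, hs⟩)
    · exact Ideal.mem_sup_left (mem_colon_span_singleton_iff.mpr ⟨s, hs⟩)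
    · exact Ideal.mem_sup_right (mem_colon_span_singleton_iff.mpr ⟨s, by linear_combination hs⟩)
  · refine sup_le (fun r hr => ?_) (fun r hr => ?_) <;>
      obtain ⟨s, hs⟩ := mem_colon_span_singleton_iff.mp hr
    · exact Ideal.subset_span (Or.inl ⟨s, hs⟩)
    · exact Ideal.subset_span (Or.inr ⟨s, by linear_combination hs⟩)

theorem colon_le_relFittingIdeal (a b : R) :
    (Ideal.span {b}).colon {a} ≤ relFittingIdeal a b :=
  relFittingIdeal_eq_colon_sup_colon a b ▸ le_sup_left

theorem forall_eq_sum_iff_eq_vecMul {m n : Type*} [Fintype n] (w : m → R) (v : n → R)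
    (A : Matrix n m R) : (∀ j, w j = ∑ i, A i j * v i) ↔ w = v ᵥ* A := by
  simp only [funext_iff, vecMul, dotProduct, mul_comm]

theorem exists_eq_vecMul_of_forall_mem_span {m n : Type*} [Fintype n] {v : n → R} {w : m → R}
    (h : ∀ j, w j ∈ Ideal.span (Set.range v)) : ∃ A : Matrix n m R, w = v ᵥ* A := by
  choose c hc using fun j => (Submodule.mem_span_range_iff_exists_fun R).mp (h j)
  exact ⟨Matrix.of fun i j => c j i, funext fun j => by
    simp [vecMul, dotProduct, ← hc j, mul_comm]⟩

theorem det_sub_det_mem_relFittingIdeal {a b : R} {A A' : Matrix (Fin 2) (Fin 2) R}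
    (h : ![a, b] ᵥ* A = ![a, b] ᵥ* A') : A.det - A'.det ∈ relFittingIdeal a b := by
  have hcol (j : Fin 2) : (A 0 j - A' 0 j) * a + (A 1 j - A' 1 j) * b = 0 := by
    have := congrFun h j
    simp only [vecMul, dotProduct, Fin.sum_univ_two, cons_val_zero, cons_val_one] at this
    linear_combination this
  rw [← Ideal.Quotient.eq, RingHom.map_det, RingHom.map_det]
  congr 1
  ext i j
  rw [RingHom.mapMatrix_apply, RingHom.mapMatrix_apply, map_apply, map_apply, Ideal.Quotient.eq]
  fin_cases i
  · exact Ideal.subset_span (Or.inl ⟨_, hcol j⟩)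
  · exact Ideal.subset_span (Or.inr ⟨_, hcol j⟩)

def SLOrbitRel {n : Type*} [Fintype n] [DecidableEq n] (w w' : n → R) : Prop :=
  ∃ σ : SpecialLinearGroup n R, w' = w ᵥ* (σ : Matrix n n R)

namespace SLOrbitRel

variable {n : Type*} [Fintype n] [DecidableEq n] {w w' w'' : n → R}

theorem symm (h : SLOrbitRel w w') : SLOrbitRel w' w := by
  obtain ⟨σ, rfl⟩ := h
  have hσ : (σ : Matrix n n R) * (σ⁻¹ : SpecialLinearGroup n R) = 1 :=
    congrArg Subtype.val (mul_inv_cancel σ)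
  exact ⟨σ⁻¹, by rw [vecMul_vecMul, hσ, vecMul_one]⟩

theorem trans (h : SLOrbitRel w w') (h' : SLOrbitRel w' w'') : SLOrbitRel w w'' := by
  obtain ⟨σ, rfl⟩ := h
  obtain ⟨τ, rfl⟩ := h'
  exact ⟨σ * τ, by rw [vecMul_vecMul]; rfl⟩

theorem span_range_le (h : SLOrbitRel w w') :
    Ideal.span (Set.range w') ≤ Ideal.span (Set.range w) := by
  obtain ⟨σ, rfl⟩ := h
  rw [Ideal.span_le]
  rintro _ ⟨j, rfl⟩
  exact Ideal.sum_mem _ fun i _ => Ideal.mul_mem_right _ _ (Ideal.subset_span ⟨i, rfl⟩)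

theorem span_pair_eq {w w' : Fin 2 → R} (h : SLOrbitRel w w') :
    Ideal.span {w' 0, w' 1} = Ideal.span {w 0, w 1} := by
  have hrange (v : Fin 2 → R) : Set.range v = {v 0, v 1} := by
    ext; simp [Fin.exists_fin_two, eq_comm]
  simpa only [hrange] using le_antisymm h.span_range_le h.symm.span_range_le

theorem det_sub_det_mem {a b : R} {w w' : Fin 2 → R} {A A' : Matrix (Fin 2) (Fin 2) R}
    (h : SLOrbitRel w w') (hA : w = ![a, b] ᵥ* A) (hA' : w' = ![a, b] ᵥ* A') :
    A.det - A'.det ∈ relFittingIdeal a b := by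
  obtain ⟨σ, rfl⟩ := h
  have := det_sub_det_mem_relFittingIdeal (A := A * (σ : Matrix (Fin 2) (Fin 2) R)) (A' := A')
    (by rw [← vecMul_vecMul, ← hA, hA'])
  rwa [det_mul, σ.det_coe, mul_one] at this

end SLOrbitRel

theorem slOrbitRel_pair {x y x' y' : R} (X Y Z T : R) (hdet : X * T - Z * Y = 1)
    (hx : x' = X * x + Y * y) (hy : y' = Z * x + T * y) : SLOrbitRel ![x, y] ![x', y'] := by
  refine ⟨⟨!![X, Z; Y, T], by rw [det_fin_two_of]; linear_combination hdet⟩, ?_⟩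
  ext j; fin_cases j <;> simp [vecMul, dotProduct, Fin.sum_univ_two, hx, hy] <;> ring

theorem exists_slOrbitRel_snd_mul (hR : IsAlmostStableRankOne R) {a b x y : R}
    (hb : b ∈ nonZeroDivisors R) (hxy : Ideal.span {x, y} = Ideal.span {a, b}) :
    ∃ x' k : R, SLOrbitRel ![x, y] ![x', k * b] := by
  obtain ⟨p, q, rfl⟩ := Ideal.mem_span_pair.mp <|
    show x ∈ Ideal.span {a, b} from hxy ▸ Ideal.subset_span (Set.mem_insert _ _)
  obtain ⟨m, k, rfl⟩ := Ideal.mem_span_pair.mp <|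
    show y ∈ Ideal.span {a, b} from hxy ▸ Ideal.subset_span (Set.mem_insert_of_mem _ rfl)
  obtain ⟨c₁, c₂, ha⟩ := Ideal.mem_span_pair.mp <|
    show a ∈ Ideal.span {_, _} from hxy.symm ▸ Ideal.subset_span (Set.mem_insert _ _)
  have hbF : b ∈ (Ideal.span {b}).colon {a} := mem_colon_span_singleton_iff.mpr ⟨-a, by ring⟩
  have hpm : c₁ * p + c₂ * m - 1 ∈ (Ideal.span {b}).colon {a} :=
    mem_colon_span_singleton_iff.mpr ⟨c₁ * q + c₂ * k, by linear_combination ha⟩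
  obtain ⟨t, c, htc⟩ := (hR.hasStableRankOne_quotient hb hbF).exists_add_mul_mul_sub_one_mem hpm
  obtain ⟨s, hs⟩ := mem_colon_span_singleton_iff.mp htc
  -- `c` inverts `p + t m` modulo `F₁`, so `y - c m (x + t y) ∈ (b)`.
  exact ⟨p * a + q * b + t * (m * a + k * b), m * s + k - c * m * (q + t * k),
    slOrbitRel_pair 1 t (-(c * m)) (1 - c * m * t) (by ring) (by ring)
      (by linear_combination m * hs)⟩

theorem exists_slOrbitRel_snd_eq {b x k : R} (h : HasStableRankOne (R ⧸ Ideal.span {b}))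
    (hb : b ∈ Ideal.span {x, k * b}) : ∃ x', SLOrbitRel ![x, k * b] ![x', b] := by
  obtain ⟨g, l, hgl⟩ := Ideal.mem_span_pair.mp hb
  obtain ⟨t, u, htu⟩ := h.exists_add_mul_mul_sub_one_mem (x := l) (y := 1 - l * k) (α := k)
    (β := 1) (by rw [show k * l + 1 * (1 - l * k) - 1 = 0 by ring]; exact zero_mem _)
  obtain ⟨ν, hν⟩ := Ideal.mem_span_singleton'.mp htu
  -- `Z x + T (k b) = b` for `T = l + t (1 - l k)`, and `T` is a unit modulo `b`, so the row
  -- `(Z, T)` completes to a matrix of determinant one.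
  exact ⟨_, slOrbitRel_pair (u - ν * k * b) (ν * x) ((1 - t * k) * g) (l + t * (1 - l * k))
    (by linear_combination -hν - ν * (1 - t * k) * hgl) rfl
    (by linear_combination -(1 - t * k) * hgl)⟩

theorem exists_slOrbitRel_normal_form (hR : IsAlmostStableRankOne R) {a b : R}
    (hb : b ∈ nonZeroDivisors R) {w : Fin 2 → R}
    (hw : Ideal.span {w 0, w 1} = Ideal.span {a, b}) :
    ∃ p q : R, SLOrbitRel w ![p * a + q * b, b] := by
  have hw_eta : w = ![w 0, w 1] := by ext i; fin_cases i <;> rfl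
  rw [hw_eta]
  obtain ⟨x₁, k, h₁⟩ := exists_slOrbitRel_snd_mul hR hb hw
  have hw₁ : Ideal.span {x₁, k * b} = Ideal.span {a, b} := h₁.span_pair_eq.trans hw
  obtain ⟨x₂, h₂⟩ := exists_slOrbitRel_snd_eq (hR b hb) <| show b ∈ Ideal.span {x₁, k * b}
    from hw₁ ▸ Ideal.subset_span (Set.mem_insert_of_mem _ rfl)
  have hw₂ : Ideal.span {x₂, b} = Ideal.span {a, b} := h₂.span_pair_eq.trans hw₁
  obtain ⟨p, q, rfl⟩ := Ideal.mem_span_pair.mp <|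
    show x₂ ∈ Ideal.span {a, b} from hw₂ ▸ Ideal.subset_span (Set.mem_insert _ _)
  exact ⟨p, q, h₁.trans h₂⟩

theorem slOrbitRel_add_mul_left {a b : R} (hb : b ∈ nonZeroDivisors R) {p q f g κ : R}
    (hfg : g * a + f * b = 0) (hκ : κ * p * (p + f) - 1 ∈ (Ideal.span {b}).colon {a}) :
    SLOrbitRel ![p * a + q * b, b] ![p * a + q * b + f * a, b] := by
  obtain ⟨s, hs⟩ := mem_colon_span_singleton_iff.mp hκ
  -- With `x = p a + q b`: `(Z, T)` is forced by `Z x + T b = b` and `Z ∈ (g)`, then `X = 1 + E`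
  -- makes `det · b = b`, and `X x + Y b = x + f a` is solvable because `E p ≡ f` modulo `F₁`.
  set E := κ * (p * f - g * q + f ^ 2)
  refine slOrbitRel_pair (1 + E) (f * s - κ * q * p * f - E * q) (-(κ * g))
    (1 - κ * (p * f - g * q)) ?_ (by linear_combination κ * q * p * hfg - f * hs)
    (by linear_combination κ * p * hfg)
  refine (mul_cancel_right_mem_nonZeroDivisors hb).mp ?_
  linear_combination κ * g * (f * hs - κ * q * p * hfg) - (1 + E) * κ * p * hfg
    + κ * (p + f) * hfg

theorem slOrbitRel_of_sub_mem_relFittingIdeal {a b : R} (hb : b ∈ nonZeroDivisors R)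
    {p q p' q' : R} (h : Ideal.span {p * a + q * b, b} = Ideal.span {a, b})
    (h' : Ideal.span {p' * a + q' * b, b} = Ideal.span {a, b})
    (hp : p' - p ∈ relFittingIdeal a b) :
    SLOrbitRel ![p * a + q * b, b] ![p' * a + q' * b, b] := by
  obtain ⟨c, d, hcd⟩ := Ideal.mem_span_pair.mp <|
    show a ∈ Ideal.span {_, _} from h.symm ▸ Ideal.subset_span (Set.mem_insert _ _)
  obtain ⟨c', d', hcd'⟩ := Ideal.mem_span_pair.mp <|
    show a ∈ Ideal.span {_, _} from h'.symm ▸ Ideal.subset_span (Set.mem_insert _ _)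
  have hc : c * p - 1 ∈ (Ideal.span {b}).colon {a} :=
    mem_colon_span_singleton_iff.mpr ⟨c * q + d, by linear_combination hcd⟩
  have hc' : c' * p' - 1 ∈ (Ideal.span {b}).colon {a} :=
    mem_colon_span_singleton_iff.mpr ⟨c' * q' + d', by linear_combination hcd'⟩
  rw [relFittingIdeal_eq_colon_sup_colon] at hp
  obtain ⟨f₁, hf₁, f₂, hf₂, hf⟩ := Submodule.mem_sup.mp hp
  obtain ⟨g, hg⟩ := mem_colon_span_singleton_iff.mp hf₂
  obtain ⟨s, hs⟩ := mem_colon_span_singleton_iff.mp hf₁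
  -- `p` and `p + f₂ ≡ p'` are units modulo `F₁`, with inverses `c` and `c'`.
  have hκ : c * c' * p * (p + f₂) - 1 ∈ (Ideal.span {b}).colon {a} := by
    rw [show c * c' * p * (p + f₂) - 1
        = (c * p - 1) * (c' * p') + (c' * p' - 1) - c * c' * p * f₁ by
      linear_combination c * c' * p * hf]
    exact sub_mem (add_mem (Ideal.mul_mem_right _ _ hc) hc') (Ideal.mul_mem_left _ _ hf₁)
  exact (slOrbitRel_add_mul_left hb (g := g) (by linear_combination hg) hκ).trans <|
    slOrbitRel_pair 1 (q' - q - s) 0 1 (by ring)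
      (by linear_combination hs - a * hf) (by ring)

theorem slOrbitRel_of_det_sub_det_mem (hR : IsAlmostStableRankOne R) {a b : R}
    (hb : b ∈ nonZeroDivisors R) {w w' : Fin 2 → R} {A A' : Matrix (Fin 2) (Fin 2) R}
    (hw : Ideal.span {w 0, w 1} = Ideal.span {a, b})
    (hw' : Ideal.span {w' 0, w' 1} = Ideal.span {a, b})
    (hA : w = ![a, b] ᵥ* A) (hA' : w' = ![a, b] ᵥ* A')
    (hdet : A.det - A'.det ∈ relFittingIdeal a b) : SLOrbitRel w w' := by
  obtain ⟨p, q, hn⟩ := exists_slOrbitRel_normal_form hR hb hw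
  obtain ⟨p', q', hn'⟩ := exists_slOrbitRel_normal_form hR hb hw'
  have hnormal (p q : R) : ![p * a + q * b, b] = ![a, b] ᵥ* !![p, 0; q, 1] := by
    ext j; fin_cases j <;> simp [vecMul, dotProduct, Fin.sum_univ_two, mul_comm]
  have hdp := hn.det_sub_det_mem hA (hnormal p q)
  have hdp' := hn'.det_sub_det_mem hA' (hnormal p' q')
  rw [det_fin_two_of, mul_one, zero_mul, sub_zero] at hdp hdp'
  have hp : p' - p ∈ relFittingIdeal a b := by
    rw [show p' - p = (A.det - p) - (A'.det - p') - (A.det - A'.det) by ring]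
    exact sub_mem (sub_mem hdp hdp') hdet
  have hspan : Ideal.span {p * a + q * b, b} = Ideal.span {a, b} := hn.span_pair_eq.trans hw
  have hspan' : Ideal.span {p' * a + q' * b, b} = Ideal.span {a, b} :=
    hn'.span_pair_eq.trans hw'
  exact hn.trans
    ((slOrbitRel_of_sub_mem_relFittingIdeal hb hspan hspan' hp).trans hn'.symm)

theorem span_pair_mul_right_eq {a b u e : R} (hu : u * e - 1 ∈ (Ideal.span {a}).colon {b}) :
    Ideal.span {a, u * b} = Ideal.span {a, b} := by
  obtain ⟨s, hs⟩ := mem_colon_span_singleton_iff.mp hu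
  apply le_antisymm <;>
    simp only [Ideal.span_le, Set.insert_subset_iff, Set.singleton_subset_iff, SetLike.mem_coe]
  · exact ⟨Ideal.subset_span (Set.mem_insert _ _),
      Ideal.mem_span_pair.mpr ⟨0, u, by ring⟩⟩
  · exact ⟨Ideal.subset_span (Set.mem_insert _ _),
      Ideal.mem_span_pair.mpr ⟨s, e, by linear_combination hs⟩⟩

theorem exists_span_pair_mul_right_eq_and_mk_eq (hR : IsAlmostStableRankOne R) {a b : R}
    (ha : a ∈ nonZeroDivisors R) (u : (R ⧸ relFittingIdeal a b)ˣ) :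
    ∃ v : R, Ideal.span {a, v * b} = Ideal.span {a, b} ∧
      Ideal.Quotient.mk (relFittingIdeal a b) v = u := by
  obtain ⟨c, hc⟩ := Ideal.Quotient.mk_surjective (u : R ⧸ relFittingIdeal a b)
  obtain ⟨d, hd⟩ := Ideal.Quotient.mk_surjective (↑u⁻¹ : R ⧸ relFittingIdeal a b)
  have hcd : c * d - 1 ∈ relFittingIdeal a b := by
    rw [← Ideal.Quotient.eq_zero_iff_mem, map_sub, map_mul, map_one, hc, hd, Units.mul_inv,
      sub_self]
  rw [relFittingIdeal_eq_colon_sup_colon] at hcd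
  obtain ⟨f₁, hf₁, f₂, hf₂, hf⟩ := Submodule.mem_sup.mp hcd
  have haF : a ∈ (Ideal.span {a}).colon {b} := mem_colon_span_singleton_iff.mpr ⟨-b, by ring⟩
  obtain ⟨t, e, hte⟩ := (hR.hasStableRankOne_quotient ha haF).exists_add_mul_mul_sub_one_mem
    (x := c) (y := f₁) (α := d) (β := -1)
    (by rw [show d * c + -1 * f₁ - 1 = f₂ by linear_combination -hf]; exact hf₂)
  refine ⟨c + t * f₁, span_pair_mul_right_eq hte, ?_⟩
  rw [map_add, hc, Ideal.Quotient.eq_zero_iff_mem.mpr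
    (colon_le_relFittingIdeal a b (Ideal.mul_mem_left _ t hf₁)), add_zero]

end

/-- Let `R` be almost of stable rank 1 (`R/Rr` has stable rank 1 for
every regular `r`) and `I` an ideal generated by two regular elements `a`, `b`. Then the
determinant map induces a bijection `V₂(I)/SL₂(R) ≃ (R/Fitt₁(I))ˣ`: every generating
pair of `I` is obtained from `(a, b)` by a matrix; two generating pairs are
`SL₂(R)`-equivalent iff their determinants agree mod `Fitt₁(I)` (injectivity); and every
unit of `R/Fitt₁(I)` is attained (surjectivity). -/
theorem det_bijection_of_almost_stable_rank_one {R : Type*} [CommRing R]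
    (hasr : ∀ r ∈ nonZeroDivisors R, ∀ x y : R ⧸ Ideal.span {r},
      Ideal.span {x, y} = ⊤ → ∃ t : R ⧸ Ideal.span {r}, IsUnit (x + t * y))
    (a b : R) (ha : a ∈ nonZeroDivisors R) (hb : b ∈ nonZeroDivisors R)
    (I : Ideal R) (hI : I = Ideal.span {a, b}) :
    (∀ w : Fin 2 → R, Ideal.span {w 0, w 1} = I →
      ∃ A : Matrix (Fin 2) (Fin 2) R, ∀ j, w j = ∑ i, A i j * ![a, b] i) ∧
    (∀ (w w' : Fin 2 → R) (A A' : Matrix (Fin 2) (Fin 2) R),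
      Ideal.span {w 0, w 1} = I → Ideal.span {w' 0, w' 1} = I →
      (∀ j, w j = ∑ i, A i j * ![a, b] i) → (∀ j, w' j = ∑ i, A' i j * ![a, b] i) →
      ((A.det - A'.det ∈ relFittingIdeal a b) ↔
        ∃ σ : Matrix.SpecialLinearGroup (Fin 2) R,
          ∀ j, w' j = ∑ i, (σ : Matrix (Fin 2) (Fin 2) R) i j * w i)) ∧
    (∀ u : (R ⧸ relFittingIdeal a b)ˣ,
      ∃ (w : Fin 2 → R) (A : Matrix (Fin 2) (Fin 2) R),
        Ideal.span {w 0, w 1} = I ∧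
        (∀ j, w j = ∑ i, A i j * ![a, b] i) ∧
        Ideal.Quotient.mk (relFittingIdeal a b) A.det = (u : R ⧸ relFittingIdeal a b)) := by
  subst hI
  simp only [forall_eq_sum_iff_eq_vecMul]
  refine ⟨fun w hw => exists_eq_vecMul_of_forall_mem_span fun j => ?_,
    fun w w' A A' hw hw' hA hA' => ⟨slOrbitRel_of_det_sub_det_mem hasr hb hw hw' hA hA',
      fun hσ => SLOrbitRel.det_sub_det_mem hσ hA hA'⟩, fun u => ?_⟩
  · rw [range_cons_cons_empty, ← hw]
    fin_cases j
    exacts [Ideal.subset_span (Set.mem_insert _ _),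
      Ideal.subset_span (Set.mem_insert_of_mem _ rfl)]
  · obtain ⟨v, hv, hvu⟩ := exists_span_pair_mul_right_eq_and_mk_eq hasr ha u
    refine ⟨![a, v * b], !![1, 0; 0, v], hv, ?_, ?_⟩
    · ext j; fin_cases j <;> simp [vecMul, dotProduct, mul_comm]
    · rwa [det_fin_two_of, one_mul, mul_zero, sub_zero]
end

section
/- Let R be a reduced commutative ring with finitely many minimal prime ideals, and let I be a faithful ideal of R generated by a vector m = (m₁,…,m_n). Then there exists a generating vector m' of I all of whose components are regular elements of R, with m' obtained from m by elementary transformations (i.e., m ∼_{Eₙ(R)} m'). -/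
/-!
In a reduced ring the minimal primes intersect in `0`, so an element lying in no minimal prime is
regular; and when there are finitely many minimal primes, a faithful ideal lies in none of them.
Prime avoidance, in the form "`x + J` meets the complement of every prime of a finite antichain `S`
as soon as `J ⊄ p` for each `p ∈ S` containing `x`", then does the rest: first add to `m k` an
element of the ideal generated by the other entries so that `m k` avoids every minimal prime, then
add to each other entry a multiple of `m k`. Both are elementary operations.
-/

open Function Matrix

section MinimalPrimes

variable {R : Type*} [CommRing R]

theorem isAntichain_minimalPrimes : IsAntichain (· ≤ ·) (minimalPrimes R) :=
  minimalPrimes_eq_minimals (R := R) ▸ setOfPred_minimal_antichain _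

theorem Ideal.exists_mem_forall_add_notMem {S : Finset (Ideal R)} (hprime : ∀ p ∈ S, p.IsPrime)
    (hanti : IsAntichain (· ≤ ·) (S : Set (Ideal R))) {x : R} {J : Ideal R}
    (hJ : ∀ p ∈ S, x ∈ p → ¬J ≤ p) : ∃ a ∈ J, ∀ p ∈ S, x + a ∉ p := by
  classical
  -- `a` lies in `J` and in every `p ∈ S` not containing `x`, but in no `p ∈ S` containing `x`.
  obtain ⟨a, haK, haA⟩ : ∃ a ∈ J ⊓ (S.filter (x ∉ ·)).inf id,
      a ∉ ⋃ p ∈ (S.filter (x ∈ ·) : Set (Ideal R)), (p : Set R) := by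
    by_contra! h
    obtain ⟨p, hp, hKp⟩ := (subset_union_prime ⊥ ⊥
      (fun p hp _ _ => hprime p (Finset.mem_filter.1 hp).1)).1 fun a ha => h a ha
    obtain ⟨hpS, hxp⟩ := Finset.mem_filter.1 hp
    rcases (hprime p hpS).inf_le.1 hKp with hJp | hBp
    · exact hJ p hpS hxp hJp
    · obtain ⟨q, hq, hqp⟩ := (hprime p hpS).inf_le'.1 hBp
      obtain ⟨hqS, hxq⟩ := Finset.mem_filter.1 hq
      exact hxq (hanti.eq hqS hpS hqp ▸ hxp)
  refine ⟨a, (inf_le_left : _ ≤ J) haK, fun p hp hxa => ?_⟩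
  by_cases hxp : x ∈ p
  · have hpA : p ∈ S.filter (x ∈ ·) := Finset.mem_filter.2 ⟨hp, hxp⟩
    exact haA (Set.mem_biUnion hpA ((Ideal.add_mem_iff_right p hxp).1 hxa))
  · have hpB : p ∈ S.filter (x ∉ ·) := Finset.mem_filter.2 ⟨hp, hxp⟩
    have hap : a ∈ p := Finset.inf_le (f := id) hpB (Submodule.mem_inf.1 haK).2
    exact hxp ((Ideal.add_mem_iff_left p hap).1 hxa)

variable [IsReduced R]

theorem eq_zero_of_forall_mem_minimalPrimes {x : R} (hx : ∀ p ∈ minimalPrimes R, x ∈ p) :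
    x = 0 := by
  have : x ∈ sInf (minimalPrimes R) := Submodule.mem_sInf.2 hx
  rwa [minimalPrimes, Ideal.sInf_minimalPrimes, ← Ideal.zero_eq_bot, ← nilradical,
    nilradical_eq_zero] at this

theorem mem_nonZeroDivisors_of_forall_notMem_minimalPrimes {x : R}
    (hx : ∀ p ∈ minimalPrimes R, x ∉ p) : x ∈ nonZeroDivisors R :=
  mem_nonZeroDivisors_iff_right.2 fun _ hy => eq_zero_of_forall_mem_minimalPrimes fun p hp =>
    ((Ideal.IsMinimalPrime.isPrime hp).mem_or_mem (hy ▸ p.zero_mem)).resolve_right (hx p hp)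

theorem Ideal.not_le_of_mem_minimalPrimes_of_faithful (hfin : (minimalPrimes R).Finite)
    {I : Ideal R} (hI : ∀ r : R, (∀ x ∈ I, r * x = 0) → r = 0) {p : Ideal R}
    (hp : p ∈ minimalPrimes R) : ¬I ≤ p := by
  classical
  intro hIp
  have hp' := Ideal.IsMinimalPrime.isPrime hp
  obtain ⟨s, hs, hsp⟩ : ∃ s ∈ (hfin.toFinset.erase p).inf id, s ∉ p := by
    refine SetLike.not_le_iff_exists.1 fun h => ?_
    obtain ⟨q, hq, hqp⟩ := hp'.inf_le'.1 h
    obtain ⟨hqp', hq⟩ := Finset.mem_erase.1 hq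
    exact hqp' (isAntichain_minimalPrimes.eq (hfin.mem_toFinset.1 hq) hp hqp)
  suffices s = 0 from hsp (this ▸ p.zero_mem)
  refine hI s fun x hx => eq_zero_of_forall_mem_minimalPrimes fun q hq => ?_
  by_cases hqp : q = p
  · exact hqp ▸ p.mul_mem_left s (hIp hx)
  · exact q.mul_mem_right x
      (Finset.inf_le (f := id) (Finset.mem_erase.2 ⟨hqp, hfin.mem_toFinset.2 hq⟩) hs)

end MinimalPrimes

section Elementary

variable {R : Type*} [CommRing R] {ι : Type*} [Fintype ι]

theorem Ideal.span_range_vecMul_le {κ : Type*} (m : ι → R) (M : Matrix ι κ R) :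
    Ideal.span (Set.range (m ᵥ* M)) ≤ Ideal.span (Set.range m) := by
  rw [Ideal.span_le]
  rintro _ ⟨j, rfl⟩
  exact Ideal.sum_mem _ fun i _ => Ideal.mul_mem_right _ _ (Ideal.subset_span ⟨i, rfl⟩)

variable [DecidableEq ι]

/-- The paper's `m ∼_{Eₙ(R)} m'`. -/
def ElementaryEquivalent (m m' : ι → R) : Prop :=
  ∃ L : List (TransvectionStruct ι R), m' = m ᵥ* (L.map TransvectionStruct.toMatrix).prod

namespace ElementaryEquivalent

variable {m m' m'' : ι → R}

theorem refl (m : ι → R) : ElementaryEquivalent m m := ⟨[], by simp⟩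

theorem trans (h : ElementaryEquivalent m m') (h' : ElementaryEquivalent m' m'') :
    ElementaryEquivalent m m'' := by
  obtain ⟨L, rfl⟩ := h
  obtain ⟨L', rfl⟩ := h'
  exact ⟨L ++ L', by simp [vecMul_vecMul]⟩

theorem symm (h : ElementaryEquivalent m m') : ElementaryEquivalent m' m := by
  obtain ⟨L, rfl⟩ := h
  refine ⟨L.reverse.map TransvectionStruct.inv, ?_⟩
  rw [vecMul_vecMul, List.map_map, TransvectionStruct.prod_mul_reverse_inv_prod, vecMul_one]

theorem span_range_le (h : ElementaryEquivalent m m') :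
    Ideal.span (Set.range m') ≤ Ideal.span (Set.range m) := by
  obtain ⟨L, rfl⟩ := h
  exact Ideal.span_range_vecMul_le _ _

theorem span_range_eq (h : ElementaryEquivalent m m') :
    Ideal.span (Set.range m') = Ideal.span (Set.range m) :=
  le_antisymm h.span_range_le h.symm.span_range_le

theorem update_add_mul (m : ι → R) {i j : ι} (hij : i ≠ j) (c : R) :
    ElementaryEquivalent m (update m j (m j + c * m i)) := by
  refine ⟨[⟨i, j, hij, c⟩], ?_⟩
  rw [List.map_singleton, List.prod_singleton, TransvectionStruct.toMatrix_mk, transvection,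
    vecMul_add, vecMul_one]
  ext k
  rcases eq_or_ne k j with rfl | hk
  · simp [vecMul, dotProduct, single_apply, mul_comm]
  · simp [vecMul, dotProduct, hk, hk.symm]

theorem update_add_of_mem_span {k : ι} {a : R} (ha : a ∈ Ideal.span (m '' {k}ᶜ)) :
    ElementaryEquivalent m (update m k (m k + a)) := by
  -- Generalizing over `r` handles scalar multiples; over `v`, the intermediate vectors.
  suffices h : ∀ v : ι → R, (∀ j ≠ k, v j = m j) → ∀ r,
      ElementaryEquivalent v (update v k (v k + r * a)) by
    simpa using h m (fun _ _ => rfl) 1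
  induction ha using Submodule.span_induction with
  | mem x hx =>
    obtain ⟨j, hjk, rfl⟩ := hx
    intro v hv r
    rw [← hv j hjk]
    exact update_add_mul v hjk r
  | zero => intro v _ r; simpa using refl v
  | add x y _ _ hx hy =>
    intro v hv r
    refine (hx v hv r).trans ?_
    have := hy (update v k (v k + r * x)) (fun j hj => by rw [update_of_ne hj, hv j hj]) r
    simpa [mul_add, add_assoc] using this
  | smul s x _ hx =>
    intro v hv r
    simpa [mul_assoc] using hx v hv (r * s)

theorem add_mul_apply_on (m : ι → R) {k : ι} (d : ι → R) {s : Finset ι} (hk : k ∉ s) :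
    ElementaryEquivalent m (fun j => if j ∈ s then m j + d j * m k else m j) := by
  induction s using Finset.induction_on with
  | empty => simpa using refl m
  | insert j s hjs ih =>
    have hjk : j ≠ k := fun h => hk (h ▸ Finset.mem_insert_self j s)
    rw [Finset.mem_insert, not_or] at hk
    refine (ih hk.2).trans ?_
    convert update_add_mul _ hjk.symm (d j) using 1
    ext l
    by_cases hl : l = j <;> simp [hl, hjs, hk.2]

variable {S : Finset (Ideal R)}

theorem exists_apply_notMem (hprime : ∀ p ∈ S, p.IsPrime)
    (hanti : IsAntichain (· ≤ ·) (S : Set (Ideal R))) (k : ι)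
    (hm : ∀ p ∈ S, ¬Ideal.span (Set.range m) ≤ p) :
    ∃ m', ElementaryEquivalent m m' ∧ ∀ p ∈ S, m' k ∉ p := by
  obtain ⟨a, ha, hka⟩ := Ideal.exists_mem_forall_add_notMem hprime hanti
    (x := m k) (J := Ideal.span (m '' {k}ᶜ)) fun p hp hkp hJp => hm p hp <| by
      rw [Ideal.span_le] at hJp ⊢
      rintro _ ⟨j, rfl⟩
      by_cases hj : j = k
      · exact hj ▸ hkp
      · exact hJp ⟨j, hj, rfl⟩
  exact ⟨_, update_add_of_mem_span ha, by simpa using hka⟩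

theorem exists_forall_notMem_of_apply_notMem (hprime : ∀ p ∈ S, p.IsPrime)
    (hanti : IsAntichain (· ≤ ·) (S : Set (Ideal R)))
    {k : ι} (hk : ∀ p ∈ S, m k ∉ p) :
    ∃ m', ElementaryEquivalent m m' ∧ ∀ j, ∀ p ∈ S, m' j ∉ p := by
  have (j : ι) : ∃ d : R, ∀ p ∈ S, m j + d * m k ∉ p := by
    obtain ⟨a, ha, hja⟩ := Ideal.exists_mem_forall_add_notMem hprime hanti
      (x := m j) (J := Ideal.span {m k})
      fun p hp _ hkp => hk p hp (hkp (Ideal.mem_span_singleton_self _))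
    obtain ⟨d, rfl⟩ := Ideal.mem_span_singleton'.1 ha
    exact ⟨d, hja⟩
  choose d hd using this
  refine ⟨_, add_mul_apply_on m d (Finset.notMem_erase k Finset.univ), fun j => ?_⟩
  by_cases hj : j = k
  · simpa [hj] using hk
  · simpa [hj] using hd j

theorem exists_forall_notMem (hprime : ∀ p ∈ S, p.IsPrime)
    (hanti : IsAntichain (· ≤ ·) (S : Set (Ideal R)))
    (hm : ∀ p ∈ S, ¬Ideal.span (Set.range m) ≤ p) :
    ∃ m', ElementaryEquivalent m m' ∧ ∀ j, ∀ p ∈ S, m' j ∉ p := by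
  cases isEmpty_or_nonempty ι with
  | inl _ => exact ⟨m, refl m, isEmptyElim⟩
  | inr h =>
    obtain ⟨m₁, h₁, hk⟩ := exists_apply_notMem hprime hanti h.some hm
    obtain ⟨m₂, h₂, hm₂⟩ := exists_forall_notMem_of_apply_notMem hprime hanti hk
    exact ⟨m₂, h₁.trans h₂, hm₂⟩

end ElementaryEquivalent

end Elementary

/-- Over a reduced ring with finitely many minimal primes, any
generating vector of a faithful ideal is `Eₙ(R)`-equivalent (via a product of elementary
transvection matrices) to a generating vector all of whose components are regular. -/
theorem regular_generators_up_to_elementary {R : Type*} [CommRing R] [IsReduced R]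
    (hfin : (minimalPrimes R).Finite)
    (I : Ideal R) (hfaithful : ∀ r : R, (∀ x ∈ I, r * x = 0) → r = 0)
    {n : ℕ} (m : Fin n → R) (hm : Ideal.span (Set.range m) = I) :
    ∃ (m' : Fin n → R) (L : List (Matrix (Fin n) (Fin n) R)),
      Ideal.span (Set.range m') = I ∧
      (∀ i, m' i ∈ nonZeroDivisors R) ∧
      (∀ E ∈ L, ∃ (i j : Fin n) (c : R), i ≠ j ∧ E = Matrix.transvection i j c) ∧
      (∀ j, m' j = ∑ i, L.prod i j * m i) := by
  have hanti : IsAntichain (· ≤ ·) (hfin.toFinset : Set (Ideal R)) := by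
    rw [hfin.coe_toFinset]
    exact isAntichain_minimalPrimes
  obtain ⟨m', hm', hreg⟩ := ElementaryEquivalent.exists_forall_notMem
    (fun p hp => Ideal.IsMinimalPrime.isPrime (hfin.mem_toFinset.1 hp)) hanti
    fun p hp => hm ▸ Ideal.not_le_of_mem_minimalPrimes_of_faithful hfin hfaithful
      (hfin.mem_toFinset.1 hp)
  have hspan := hm'.span_range_eq
  obtain ⟨L, rfl⟩ := hm'
  refine ⟨_, L.map TransvectionStruct.toMatrix, hspan.trans hm,
    fun j => mem_nonZeroDivisors_of_forall_notMem_minimalPrimes fun p hp =>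
      hreg j p (hfin.mem_toFinset.2 hp), ?_, fun j => ?_⟩
  · intro E hE
    obtain ⟨t, -, rfl⟩ := List.mem_map.1 hE
    exact ⟨t.i, t.j, t.c, t.hij, rfl⟩
  · simp [vecMul, dotProduct, mul_comm]
end

section
/- Let R ⊆ S ⊆ K(R) be commutative rings with S a principal ideal domain, and let I be a two-generated ideal of R. Then the conductor (R:S) = {r ∈ R : rS ⊆ R} is contained in Fitt₁(I). -/
/-!
Over `S` the ideal `(a, b)` is principal, and then the colon ideals `(a) : b` and `(b) : a`,
whose sum is `Fitt₁` over `S`, together contain `1`. Write `1 = w₁ + w₂` accordingly. As `r` is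
in the conductor, `r w₁` and `r w₂` lie in `R`, and `w₁ b = c a` in `S` becomes the relation
`(r w₁) b = (r c) a` over `R`; hence `r = r w₁ + r w₂ ∈ Fitt₁(a, b)`.
-/

theorem relFittingIdeal_comm {R : Type*} [CommRing R] (a b : R) :
    relFittingIdeal a b = relFittingIdeal b a := by
  simp only [relFittingIdeal, add_comm, or_comm]

theorem Ideal.span_singleton_colon_sup_span_singleton_colon_eq_top {S : Type*} [CommRing S]
    {A B : S} (h : (Ideal.span {A, B}).IsPrincipal) :
    (Ideal.span {A}).colon {B} ⊔ (Ideal.span {B}).colon {A} = ⊤ := by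
  obtain ⟨d, hd⟩ := h.principal
  rw [Ideal.submodule_span_eq] at hd
  obtain ⟨x, y, hxy⟩ := Ideal.mem_span_pair.mp (hd ▸ Ideal.mem_span_singleton_self d)
  have hA : A ∈ Ideal.span {d} := hd ▸ Ideal.subset_span (by simp)
  have hB : B ∈ Ideal.span {d} := hd ▸ Ideal.subset_span (by simp)
  obtain ⟨u, rfl⟩ := Ideal.mem_span_singleton'.mp hA
  obtain ⟨v, rfl⟩ := Ideal.mem_span_singleton'.mp hB
  rw [eq_top_iff_one, Submodule.mem_sup]
  -- `1 - y v` agrees with `x u` up to an element killing `d = x A + y B`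
  refine ⟨1 - y * v, ?_, y * v, ?_, sub_add_cancel 1 _⟩
  all_goals
    rw [Submodule.mem_colon_singleton, smul_eq_mul, Ideal.mem_span_singleton']
  · exact ⟨x * v, by linear_combination v * hxy⟩
  · exact ⟨y * u, by ring⟩

theorem mem_relFittingIdeal_of_mem_colon {R K : Type*} [CommRing R] [CommRing K] [Algebra R K]
    [FaithfulSMul R K] (S : Subalgebra R K) {a b r t : R}
    (hr : ∀ s ∈ S, ∃ t : R, algebraMap R K r * s = algebraMap R K t) {w : S}
    (hw : w ∈ (Ideal.span {algebraMap R S a}).colon {algebraMap R S b})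
    (ht : algebraMap R K r * w = algebraMap R K t) :
    t ∈ relFittingIdeal a b := by
  rw [Submodule.mem_colon_singleton, smul_eq_mul, Ideal.mem_span_singleton'] at hw
  obtain ⟨c, hc⟩ := hw
  obtain ⟨t', ht'⟩ := hr c c.2
  have hcK : (c : K) * algebraMap R K a = w * algebraMap R K b := congrArg Subtype.val hc
  refine Ideal.subset_span (Or.inr ⟨-t', FaithfulSMul.algebraMap_injective R K ?_⟩)
  simp only [map_add, map_mul, map_neg, map_zero]
  linear_combination algebraMap R K a * ht' - algebraMap R K b * ht -
    algebraMap R K r * hcK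

theorem conductor_le_fitting_general {R : Type*} [CommRing R]
    (S : Subalgebra R (FractionRing R)) [IsPrincipalIdealRing S]
    (a b : R)
    (r : R)
    (hr : ∀ s ∈ S, ∃ t : R,
      algebraMap R (FractionRing R) r * s = algebraMap R (FractionRing R) t) :
    r ∈ relFittingIdeal a b := by
  have hone : (1 : S) ∈ (Ideal.span {algebraMap R S a}).colon {algebraMap R S b} ⊔
      (Ideal.span {algebraMap R S b}).colon {algebraMap R S a} := by
    rw [Ideal.span_singleton_colon_sup_span_singleton_colon_eq_top
      (IsPrincipalIdealRing.principal _)]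
    exact Submodule.mem_top
  obtain ⟨w₁, hw₁, w₂, hw₂, hsum⟩ := Submodule.mem_sup.mp hone
  obtain ⟨t₁, ht₁⟩ := hr w₁ w₁.2
  obtain ⟨t₂, ht₂⟩ := hr w₂ w₂.2
  have hrt : r = t₁ + t₂ := by
    apply FaithfulSMul.algebraMap_injective R (FractionRing R)
    rw [map_add, ← ht₁, ← ht₂, ← mul_add, ← Subalgebra.coe_add, hsum, Subalgebra.coe_one,
      mul_one]
  rw [hrt]
  exact add_mem (mem_relFittingIdeal_of_mem_colon S hr hw₁ ht₁)
    (relFittingIdeal_comm b a ▸ mem_relFittingIdeal_of_mem_colon S hr hw₂ ht₂)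

/-- Let `R ⊆ S ⊆ K(R)` with `S` a principal ideal domain, and let `I`
be the two-generated ideal with generating pair `(a, b)`. Then the conductor
`(R : S) = {r ∈ R | r S ⊆ R}` is contained in `Fitt₁(I)`. -/
theorem conductor_le_fitting {R : Type*} [CommRing R]
    (S : Subalgebra R (FractionRing R)) [IsDomain S] [IsPrincipalIdealRing S]
    (a b : R) (I : Ideal R) (hI : I = Ideal.span {a, b})
    (r : R)
    (hr : ∀ s ∈ S, ∃ t : R,
      algebraMap R (FractionRing R) r * s = algebraMap R (FractionRing R) t) :
    r ∈ relFittingIdeal a b :=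
  conductor_le_fitting_general S a b r hr
end

section
/- Let p be a prime and R = ℤ[C_p] the integral group ring of a cyclic group of order p with generator c. Then for every faithful non-invertible ideal I of R one has Fitt₁(I) = R(c−1) + Rp, and this ideal is maximal in R. -/
/-- The integral group ring `ℤ[C_p] = ℤ[x]/(x^p - 1)` of the cyclic group of order `p`. -/
def CyclicGroupRing (p : ℕ) : Type :=
  Polynomial ℤ ⧸ Ideal.span {(Polynomial.X : Polynomial ℤ) ^ p - 1}

noncomputable instance (p : ℕ) : CommRing (CyclicGroupRing p) := by
  unfold CyclicGroupRing; infer_instance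

/-- The generator `c` of the cyclic group, i.e. the image of `x` in `ℤ[x]/(x^p - 1)`. -/
noncomputable def cyclicGen (p : ℕ) : CyclicGroupRing p :=
  Ideal.Quotient.mk _ Polynomial.X

/-!
`ℤ[C_p]` embeds into `ℤ × ℤ[ζ_p]` through the augmentation and `c ↦ ζ_p`. The kernels of the
two projections are `(c - 1)` and `(N)`, where `N = 1 + c + ⋯ + c^(p-1)` and `N (c - 1) = 0`.

For any ideal `I = (a, b)`, every `q ∈ I⁻¹` gives the relation `(q b) a - (q a) b = 0`, so
`I I⁻¹ ∩ R ⊆ Fitt₁(I)`. If `I` is faithful, both projections of `I` are nonzero, hence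
invertible in the Dedekind domains `ℤ` and `ℤ[ζ_p]`; since `N` and `c - 1` kill the respective
kernels, these inverses pull back to show `N, c - 1 ∈ I I⁻¹`, so `𝔪 = (c - 1, p) ⊆ I I⁻¹`.
As `𝔪` is maximal and `I` is not invertible, `I I⁻¹ ∩ R = 𝔪`. Conversely, a relation
`r a + s b = 0` with `b` regular puts `r` into `I I⁻¹`, and if `b` is a zero divisor it dies in
one projection, forcing `r` into the corresponding kernel; both kernels lie in `𝔪`.
-/

open Polynomial IsLocalization
open scoped nonZeroDivisors NumberField

section MulInvIdeal

variable {R : Type*} [CommRing R] {I : Ideal R}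

/-- `I I⁻¹ ∩ R`, computed in the total ring of fractions. -/
def mulInvIdeal (I : Ideal R) : Ideal R :=
  (coeSubmodule (FractionRing R) I * (1 / coeSubmodule (FractionRing R) I)).comap
    (Algebra.linearMap R (FractionRing R))

theorem mulInvIdeal_eq_top_iff : mulInvIdeal I = ⊤ ↔
    coeSubmodule (FractionRing R) I * (1 / coeSubmodule (FractionRing R) I) = 1 := by
  rw [Ideal.eq_top_iff_one, le_antisymm_iff, Submodule.one_le, mulInvIdeal, Submodule.mem_comap,
    Algebra.linearMap_apply, map_one]
  exact and_iff_right Submodule.mul_one_div_le_one |>.symm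

theorem mem_mulInvIdeal_of_mul_eq {δ n x t : R} (hδ : δ ∈ R⁰) (hn : ∀ z ∈ I, δ ∣ n * z)
    (hx : x ∈ I) (h : n * x = δ * t) : t ∈ mulInvIdeal I := by
  let q : FractionRing R := mk' _ n ⟨δ, hδ⟩
  have hq : q ∈ 1 / coeSubmodule (FractionRing R) I := by
    rw [Submodule.mem_div_iff_forall_mul_mem]
    rintro _ ⟨z, hz, rfl⟩
    obtain ⟨w, hw⟩ := hn z hz
    refine Submodule.mem_one.mpr ⟨w, ?_⟩
    rw [Algebra.linearMap_apply, mul_comm, mul_mk'_eq_mk'_of_mul, eq_comm, mk'_eq_iff_eq_mul,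
      mul_comm z, hw, map_mul, mul_comm]
  have ht : algebraMap R _ t = algebraMap R _ x * q := by
    rw [mul_mk'_eq_mk'_of_mul, eq_comm, mk'_eq_iff_eq_mul, mul_comm x, h, map_mul, mul_comm]
  rw [mulInvIdeal, Submodule.mem_comap, Algebra.linearMap_apply, ht]
  exact Submodule.mul_mem_mul ⟨x, hx, rfl⟩ hq

theorem mem_mulInvIdeal_of_mul_add_mul_eq_zero {a b r s : R} (hb : b ∈ R⁰)
    (h : r * a + s * b = 0) : r ∈ mulInvIdeal (Ideal.span {a, b}) := by
  refine mem_mulInvIdeal_of_mul_eq hb (fun z hz => ?_) (Ideal.subset_span (by simp))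
    (mul_comm r b)
  obtain ⟨u, v, rfl⟩ := Ideal.mem_span_pair.mp hz
  exact ⟨v * r - u * s, by linear_combination u * h⟩

theorem mulInvIdeal_le_relFittingIdeal (a b : R) :
    mulInvIdeal (Ideal.span {a, b}) ≤ relFittingIdeal a b := by
  have hinj := IsFractionRing.injective R (FractionRing R)
  suffices h : coeSubmodule (FractionRing R) (Ideal.span {a, b}) *
      (1 / coeSubmodule (FractionRing R) (Ideal.span {a, b})) ≤
      coeSubmodule (FractionRing R) (relFittingIdeal a b) by
    intro t ht
    obtain ⟨f, hf, hft⟩ := h ht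
    rwa [← hinj hft]
  refine Submodule.mul_le.mpr ?_
  rintro _ ⟨z, hz, rfl⟩ q hq
  rw [Submodule.mem_div_iff_forall_mul_mem] at hq
  obtain ⟨α, hα⟩ := Submodule.mem_one.mp <| hq _ ⟨a, Ideal.subset_span (by simp), rfl⟩
  obtain ⟨β, hβ⟩ := Submodule.mem_one.mp <| hq _ ⟨b, Ideal.subset_span (by simp), rfl⟩
  simp only [Algebra.linearMap_apply] at hα hβ
  have hsyz : β * a + -α * b = 0 := hinj <| by
    simp only [map_add, map_mul, map_neg, hα, hβ, map_zero]; ring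
  have hαF : α ∈ relFittingIdeal a b :=
    Ideal.subset_span (Or.inr ⟨-β, by linear_combination -hsyz⟩)
  have hβF : β ∈ relFittingIdeal a b := Ideal.subset_span (Or.inl ⟨-α, hsyz⟩)
  obtain ⟨u, v, rfl⟩ := Ideal.mem_span_pair.mp hz
  refine ⟨u * α + v * β, add_mem (Ideal.mul_mem_left _ _ hαF) (Ideal.mul_mem_left _ _ hβF), ?_⟩
  simp only [Algebra.linearMap_apply, map_add, map_mul, hα, hβ]
  ring

variable {S : Type*} [CommRing S] {f : R →+* S} {κ : R}

theorem mul_eq_mul_of_map_eq (hκ : ∀ x, f x = 0 → κ * x = 0) {x y : R} (h : f x = f y) :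
    κ * x = κ * y :=
  sub_eq_zero.mp <| mul_sub κ x y ▸ hκ _ (by rw [map_sub, h, sub_self])

theorem dvd_mul_of_map_dvd (hf : Function.Surjective f) (hκ : ∀ x, f x = 0 → κ * x = 0)
    {δ x : R} (h : f δ ∣ f x) : δ ∣ κ * x := by
  obtain ⟨u, hu⟩ := h
  obtain ⟨u, rfl⟩ := hf u
  rw [← map_mul] at hu
  exact ⟨κ * u, by rw [mul_eq_mul_of_map_eq hκ hu]; ring⟩

theorem map_ne_bot_of_faithful (hκ : ∀ x, f x = 0 → κ * x = 0) (hκ0 : κ ≠ 0)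
    (hI : ∀ r : R, (∀ x ∈ I, r * x = 0) → r = 0) : I.map f ≠ ⊥ := by
  refine fun h => hκ0 <| hI κ fun x hx => hκ x ?_
  simpa [h] using Ideal.mem_map_of_mem f hx

theorem map_eq_zero_of_mul_add_mul_eq_zero [IsDomain S] {a b r s : R}
    (hI : (Ideal.span {a, b}).map f ≠ ⊥) (hb : f b = 0) (h : r * a + s * b = 0) : f r = 0 := by
  have ha : f a ≠ 0 := by
    contrapose! hI
    simp [Ideal.map_span, Set.image_pair, hI, hb]
  have hra := congrArg f h
  rw [map_add, map_mul, map_mul, hb, mul_zero, add_zero, map_zero] at hra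
  exact (mul_eq_zero.mp hra).resolve_right ha

theorem mem_mulInvIdeal_of_map_mul_eq_span (hf : Function.Surjective f)
    (hκ : ∀ x, f x = 0 → κ * x = 0) {δ : R} (hδ : δ ∈ R⁰) {J : Ideal S}
    (hIJ : I.map f * J = Ideal.span {f δ}) : κ ∈ mulInvIdeal I := by
  -- `κ * f⁻¹(m)` is well defined as `κ` kills `ker f`; at `m = f δ` it is `δ * κ`.
  have key : ∀ m ∈ I.map f * J, ∃ m', f m' = m ∧ ∃ t ∈ mulInvIdeal I, κ * m' = δ * t := by
    intro m hm
    refine Submodule.mul_induction_on hm (fun y hy w hw => ?_) ?_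
    · obtain ⟨x, hx, rfl⟩ := (Ideal.mem_map_iff_of_surjective f hf).mp hy
      obtain ⟨w, rfl⟩ := hf w
      have hdvd : ∀ z ∈ I, δ ∣ κ * w * z := fun z hz => by
        rw [mul_assoc]
        refine dvd_mul_of_map_dvd hf hκ ?_
        rw [← Ideal.mem_span_singleton, ← hIJ, map_mul, mul_comm (f w)]
        exact Submodule.mul_mem_mul (Ideal.mem_map_of_mem f hz) hw
      obtain ⟨t, ht⟩ := hdvd x hx
      exact ⟨x * w, map_mul .., t, mem_mulInvIdeal_of_mul_eq hδ hdvd hx ht, by rw [← ht]; ring⟩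
    · rintro _ _ ⟨x, rfl, t, ht, hxt⟩ ⟨y, rfl, u, hu, hyu⟩
      exact ⟨x + y, map_add .., t + u, add_mem ht hu, by rw [mul_add, mul_add, hxt, hyu]⟩
  obtain ⟨m, hm, t, ht, hκt⟩ := key (f δ) (hIJ ▸ Ideal.mem_span_singleton_self _)
  rw [mul_eq_mul_of_map_eq hκ hm, mul_comm, mul_cancel_left_mem_nonZeroDivisors hδ] at hκt
  exact hκt ▸ ht

end MulInvIdeal

namespace CyclicGroupRing

variable {p : ℕ}

-- `CyclicGroupRing p` is `AdjoinRoot (X ^ p - 1)` up to non-reducible unfolding, so the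
-- `AdjoinRoot` API is applied through definitional unfolding only.
theorem aeval_cyclicGen_eq_zero_iff {f : ℤ[X]} : aeval (cyclicGen p) f = 0 ↔ X ^ p - 1 ∣ f :=
  (AdjoinRoot.aeval_eq f ▸ AdjoinRoot.mk_eq_zero :
    aeval (AdjoinRoot.root (X ^ p - 1 : ℤ[X])) f = 0 ↔ _)

theorem cyclicGen_pow : cyclicGen p ^ p = 1 := by
  simpa [sub_eq_zero] using aeval_cyclicGen_eq_zero_iff.mpr (dvd_refl (X ^ p - 1 : ℤ[X]))

theorem aeval_cyclicGen_surjective :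
    Function.Surjective (aeval (cyclicGen p) : ℤ[X] → CyclicGroupRing p) := fun z => by
  obtain ⟨f, hf⟩ := AdjoinRoot.mk_surjective (g := (X ^ p - 1 : ℤ[X])) z
  exact ⟨f, (AdjoinRoot.aeval_eq f).trans hf⟩

noncomputable def lift {S : Type*} [CommRing S] (s : S) (hs : s ^ p = 1) :
    CyclicGroupRing p →+* S :=
  AdjoinRoot.lift (Int.castRingHom S) s (by simp [hs])

theorem lift_aeval_cyclicGen {S : Type*} [CommRing S] (s : S) (hs : s ^ p = 1) (f : ℤ[X]) :
    lift s hs (aeval (cyclicGen p) f) = aeval s f := by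
  have h := AdjoinRoot.lift_mk (f := (X ^ p - 1 : ℤ[X])) (i := Int.castRingHom S) (a := s)
    (by simp [hs]) f
  rw [← AdjoinRoot.aeval_eq] at h
  exact h.trans (aeval_def s f).symm

theorem lift_cyclicGen {S : Type*} [CommRing S] (s : S) (hs : s ^ p = 1) :
    lift s hs (cyclicGen p) = s := by
  simpa using lift_aeval_cyclicGen s hs X

noncomputable def augmentation : CyclicGroupRing p →+* ℤ := lift 1 (one_pow p)

theorem augmentation_cyclicGen : augmentation (cyclicGen p) = 1 := lift_cyclicGen _ _

theorem augmentation_surjective : Function.Surjective (augmentation (p := p)) :=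
  fun g => ⟨g, map_intCast _ g⟩

theorem sub_one_dvd_sub_augmentation (z : CyclicGroupRing p) :
    cyclicGen p - 1 ∣ z - augmentation z := by
  obtain ⟨f, rfl⟩ := aeval_cyclicGen_surjective z
  have h := sub_dvd_eval_sub (cyclicGen p) 1 (f.map (algebraMap ℤ (CyclicGroupRing p)))
  rw [eval_map_algebraMap, eval_map_algebraMap, ← map_one (algebraMap ℤ _),
    aeval_algebraMap_apply, map_one, eq_intCast] at h
  rwa [augmentation, lift_aeval_cyclicGen]

noncomputable def normElement : CyclicGroupRing p := ∑ i ∈ Finset.range p, cyclicGen p ^ i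

theorem normElement_mul_sub_one : normElement * (cyclicGen p - 1) = (0 : CyclicGroupRing p) := by
  rw [normElement, geom_sum_mul, cyclicGen_pow, sub_self]

theorem augmentation_normElement : augmentation (normElement (p := p)) = p := by
  simp [normElement, augmentation_cyclicGen]

theorem normElement_mul_of_augmentation_eq_zero {x : CyclicGroupRing p}
    (hx : augmentation x = 0) : normElement * x = 0 := by
  obtain ⟨t, ht⟩ := sub_one_dvd_sub_augmentation x
  rw [hx, Int.cast_zero, sub_zero] at ht
  rw [ht, ← mul_assoc, normElement_mul_sub_one, zero_mul]

theorem mem_span_sub_one_natCast_iff {z : CyclicGroupRing p} :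
    z ∈ Ideal.span {cyclicGen p - 1, (p : CyclicGroupRing p)} ↔ (p : ℤ) ∣ augmentation z := by
  constructor
  · intro hz
    obtain ⟨u, v, rfl⟩ := Ideal.mem_span_pair.mp hz
    simp [augmentation_cyclicGen]
  · rintro ⟨k, hk⟩
    obtain ⟨t, ht⟩ := sub_one_dvd_sub_augmentation z
    rw [hk] at ht
    exact Ideal.mem_span_pair.mpr ⟨t, k, by push_cast at ht; linear_combination -ht⟩

theorem isMaximal_span_sub_one_natCast [Fact p.Prime] :
    (Ideal.span {cyclicGen p - 1, (p : CyclicGroupRing p)}).IsMaximal := by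
  let φ := (Int.castRingHom (ZMod p)).comp (augmentation (p := p))
  have hsurj : Function.Surjective φ := fun n =>
    ⟨(n.val : CyclicGroupRing p), by
      rw [RingHom.comp_apply, map_natCast, map_natCast, ZMod.natCast_zmod_val]⟩
  have hker : RingHom.ker φ = Ideal.span {cyclicGen p - 1, (p : CyclicGroupRing p)} := by
    ext z
    rw [RingHom.mem_ker, mem_span_sub_one_natCast_iff, RingHom.comp_apply, eq_intCast,
      ZMod.intCast_zmod_eq_zero_iff_dvd]
  exact hker ▸ RingHom.ker_isMaximal_of_surjective φ hsurj

theorem normElement_ne_zero [NeZero p] : (normElement : CyclicGroupRing p) ≠ 0 := fun h => by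
  simpa [h, NeZero.ne p] using (augmentation_normElement (p := p)).symm

/-- Mathlib's `CyclotomicField.isCyclotomicExtension` is stated for `CyclotomicField.algebra`,
which instance search does not identify with `DivisionRing.toRatAlgebra`. -/
instance (p : ℕ) [NeZero p] : IsCyclotomicExtension {p} ℚ (CyclotomicField p ℚ) :=
  CyclotomicField.isCyclotomicExtension p ℚ

section RingOfIntegers

variable [Fact p.Prime]

noncomputable def toRingOfIntegers : CyclicGroupRing p →+* 𝓞 (CyclotomicField p ℚ) :=
  lift (IsCyclotomicExtension.zeta_spec p ℚ _).toInteger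
    (IsCyclotomicExtension.zeta_spec p ℚ _).toInteger_isPrimitiveRoot.pow_eq_one

theorem toRingOfIntegers_surjective : Function.Surjective (toRingOfIntegers (p := p)) :=
    fun y => by
  have hζ := IsCyclotomicExtension.zeta_spec p ℚ (CyclotomicField p ℚ)
  obtain ⟨f, rfl⟩ := hζ.integralPowerBasis.exists_eq_aeval' y
  refine ⟨aeval (cyclicGen p) f, ?_⟩
  rw [toRingOfIntegers, lift_aeval_cyclicGen, hζ.integralPowerBasis_gen]

theorem toRingOfIntegers_cyclicGen_sub_one_ne_zero :
    toRingOfIntegers (cyclicGen p - 1) ≠ 0 := by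
  rw [map_sub, map_one, toRingOfIntegers, lift_cyclicGen, sub_ne_zero]
  exact (IsCyclotomicExtension.zeta_spec p ℚ _).toInteger_isPrimitiveRoot.ne_one
    (Fact.out : p.Prime).one_lt

theorem cyclicGen_sub_one_ne_zero : cyclicGen p - 1 ≠ 0 := fun h =>
  toRingOfIntegers_cyclicGen_sub_one_ne_zero (by rw [h, map_zero])

theorem normElement_dvd_of_toRingOfIntegers_eq_zero {z : CyclicGroupRing p}
    (hz : toRingOfIntegers z = 0) : normElement ∣ z := by
  have hζ := IsCyclotomicExtension.zeta_spec p ℚ (CyclotomicField p ℚ)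
  obtain ⟨f, rfl⟩ := aeval_cyclicGen_surjective z
  rw [toRingOfIntegers, lift_aeval_cyclicGen] at hz
  have hf : aeval (IsCyclotomicExtension.zeta p ℚ (CyclotomicField p ℚ)) f = 0 := by
    have h := congrArg (algebraMap (𝓞 (CyclotomicField p ℚ)) (CyclotomicField p ℚ)) hz
    rwa [← aeval_algebraMap_apply, map_zero] at h
  obtain ⟨g, rfl⟩ : cyclotomic p ℤ ∣ f := cyclotomic_eq_minpoly hζ (NeZero.pos p) ▸
    minpoly.isIntegrallyClosed_dvd (hζ.isIntegral (NeZero.pos p)) hf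
  refine ⟨aeval (cyclicGen p) g, ?_⟩
  simp [cyclotomic_prime, normElement]

theorem cyclicGen_sub_one_mul_of_toRingOfIntegers_eq_zero {x : CyclicGroupRing p}
    (hx : toRingOfIntegers x = 0) : (cyclicGen p - 1) * x = 0 := by
  obtain ⟨t, rfl⟩ := normElement_dvd_of_toRingOfIntegers_eq_zero hx
  rw [← mul_assoc, mul_comm _ normElement, normElement_mul_sub_one, zero_mul]

theorem toRingOfIntegers_normElement : toRingOfIntegers (normElement (p := p)) = 0 := by
  have h := congrArg toRingOfIntegers (normElement_mul_sub_one (p := p))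
  rw [map_mul, map_zero] at h
  exact (mul_eq_zero.mp h).resolve_right toRingOfIntegers_cyclicGen_sub_one_ne_zero

theorem eq_zero_of_augmentation_eq_zero_of_toRingOfIntegers_eq_zero {z : CyclicGroupRing p}
    (h0 : augmentation z = 0) (h1 : toRingOfIntegers z = 0) : z = 0 := by
  obtain ⟨t, ht⟩ := sub_one_dvd_sub_augmentation z
  rw [h0, Int.cast_zero, sub_zero] at ht
  rw [ht, map_mul] at h1
  rw [ht, cyclicGen_sub_one_mul_of_toRingOfIntegers_eq_zero
    ((mul_eq_zero.mp h1).resolve_left toRingOfIntegers_cyclicGen_sub_one_ne_zero)]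

theorem mem_nonZeroDivisors_of_augmentation_ne_zero {δ : CyclicGroupRing p}
    (h0 : augmentation δ ≠ 0) (h1 : toRingOfIntegers δ ≠ 0) : δ ∈ (CyclicGroupRing p)⁰ :=
  mem_nonZeroDivisors_iff_right.mpr fun x hx =>
    eq_zero_of_augmentation_eq_zero_of_toRingOfIntegers_eq_zero
      (by simpa [h0] using congrArg augmentation hx)
      (by simpa [h1] using congrArg toRingOfIntegers hx)

theorem intCast_mem_nonZeroDivisors {g : ℤ} (hg : g ≠ 0) :
    (g : CyclicGroupRing p) ∈ (CyclicGroupRing p)⁰ :=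
  mem_nonZeroDivisors_of_augmentation_ne_zero (by rwa [map_intCast])
    (by rw [map_intCast]; exact_mod_cast hg)

theorem exists_mem_nonZeroDivisors_toRingOfIntegers_eq {d : 𝓞 (CyclotomicField p ℚ)}
    (hd : d ≠ 0) : ∃ δ ∈ (CyclicGroupRing p)⁰, toRingOfIntegers δ = d := by
  obtain ⟨x, rfl⟩ := toRingOfIntegers_surjective d
  by_cases hx : augmentation x = 0
  · refine ⟨x + normElement, mem_nonZeroDivisors_of_augmentation_ne_zero ?_ ?_, ?_⟩ <;>
      simp [hx, hd, augmentation_normElement, toRingOfIntegers_normElement, NeZero.ne p]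
  · exact ⟨x, mem_nonZeroDivisors_of_augmentation_ne_zero hx hd, rfl⟩

theorem normElement_mem_mulInvIdeal {I : Ideal (CyclicGroupRing p)}
    (hI : ∀ r, (∀ x ∈ I, r * x = 0) → r = 0) : normElement ∈ mulInvIdeal I := by
  obtain ⟨g, hg⟩ := Submodule.IsPrincipal.principal (I.map augmentation)
  have hg0 : g ≠ 0 := by
    rintro rfl
    refine map_ne_bot_of_faithful (fun _ => normElement_mul_of_augmentation_eq_zero)
      normElement_ne_zero hI ?_
    rw [hg, Submodule.span_zero_singleton]
  refine mem_mulInvIdeal_of_map_mul_eq_span augmentation_surjective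
    (fun _ => normElement_mul_of_augmentation_eq_zero) (intCast_mem_nonZeroDivisors hg0)
    (J := ⊤) ?_
  rw [Ideal.mul_top, hg, map_intCast]
  rfl

theorem cyclicGen_sub_one_mem_mulInvIdeal {I : Ideal (CyclicGroupRing p)}
    (hI : ∀ r, (∀ x ∈ I, r * x = 0) → r = 0) : cyclicGen p - 1 ∈ mulInvIdeal I := by
  obtain ⟨d, hdI, hd⟩ := Submodule.exists_mem_ne_zero_of_ne_bot <| map_ne_bot_of_faithful
    (fun _ => cyclicGen_sub_one_mul_of_toRingOfIntegers_eq_zero) cyclicGen_sub_one_ne_zero hI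
  obtain ⟨J, hJ⟩ := Ideal.dvd_iff_le.mpr ((Ideal.span_singleton_le_iff_mem _).mpr hdI)
  obtain ⟨δ, hδ, rfl⟩ := exists_mem_nonZeroDivisors_toRingOfIntegers_eq hd
  exact mem_mulInvIdeal_of_map_mul_eq_span toRingOfIntegers_surjective
    (fun _ => cyclicGen_sub_one_mul_of_toRingOfIntegers_eq_zero) hδ hJ.symm

theorem span_sub_one_natCast_le_mulInvIdeal {I : Ideal (CyclicGroupRing p)}
    (hI : ∀ r, (∀ x ∈ I, r * x = 0) → r = 0) :
    Ideal.span {cyclicGen p - 1, (p : CyclicGroupRing p)} ≤ mulInvIdeal I := by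
  have h1 := cyclicGen_sub_one_mem_mulInvIdeal hI
  obtain ⟨t, ht⟩ := sub_one_dvd_sub_augmentation (normElement (p := p))
  rw [augmentation_normElement, Int.cast_natCast] at ht
  have hp : (p : CyclicGroupRing p) = normElement - (cyclicGen p - 1) * t := by
    rw [← ht]; ring
  rw [Ideal.span_le, Set.insert_subset_iff, Set.singleton_subset_iff]
  exact ⟨h1, hp ▸ sub_mem (normElement_mem_mulInvIdeal hI) (Ideal.mul_mem_right _ _ h1)⟩

theorem mulInvIdeal_eq_span_sub_one_natCast {I : Ideal (CyclicGroupRing p)}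
    (hI : ∀ r, (∀ x ∈ I, r * x = 0) → r = 0) (hNI : mulInvIdeal I ≠ ⊤) :
    mulInvIdeal I = Ideal.span {cyclicGen p - 1, (p : CyclicGroupRing p)} :=
  (isMaximal_span_sub_one_natCast.eq_of_le hNI (span_sub_one_natCast_le_mulInvIdeal hI)).symm

theorem mem_span_sub_one_natCast_of_mul_add_mul_eq_zero {a b r s : CyclicGroupRing p}
    (hI : ∀ r, (∀ x ∈ Ideal.span {a, b}, r * x = 0) → r = 0)
    (hNI : mulInvIdeal (Ideal.span {a, b}) ≠ ⊤) (h : r * a + s * b = 0) :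
    r ∈ Ideal.span {cyclicGen p - 1, (p : CyclicGroupRing p)} := by
  by_cases h1 : toRingOfIntegers b = 0
  · have hr := map_eq_zero_of_mul_add_mul_eq_zero (map_ne_bot_of_faithful
      (fun _ => cyclicGen_sub_one_mul_of_toRingOfIntegers_eq_zero) cyclicGen_sub_one_ne_zero hI)
      h1 h
    obtain ⟨t, rfl⟩ := normElement_dvd_of_toRingOfIntegers_eq_zero hr
    exact mem_span_sub_one_natCast_iff.mpr
      ⟨augmentation t, by rw [map_mul, augmentation_normElement]⟩
  by_cases h0 : augmentation b = 0
  · have hr := map_eq_zero_of_mul_add_mul_eq_zero (map_ne_bot_of_faithful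
      (fun _ => normElement_mul_of_augmentation_eq_zero) normElement_ne_zero hI) h0 h
    exact mem_span_sub_one_natCast_iff.mpr (hr ▸ dvd_zero _)
  rw [← mulInvIdeal_eq_span_sub_one_natCast hI hNI]
  exact mem_mulInvIdeal_of_mul_add_mul_eq_zero
    (mem_nonZeroDivisors_of_augmentation_ne_zero h0 h1) h

theorem relFittingIdeal_eq_span_sub_one_natCast {a b : CyclicGroupRing p}
    (hI : ∀ r, (∀ x ∈ Ideal.span {a, b}, r * x = 0) → r = 0)
    (hNI : mulInvIdeal (Ideal.span {a, b}) ≠ ⊤) :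
    relFittingIdeal a b = Ideal.span {cyclicGen p - 1, (p : CyclicGroupRing p)} := by
  refine le_antisymm (Ideal.span_le.mpr ?_)
    (mulInvIdeal_eq_span_sub_one_natCast hI hNI ▸ mulInvIdeal_le_relFittingIdeal a b)
  rintro r (⟨s, h⟩ | ⟨s, h⟩)
  · exact mem_span_sub_one_natCast_of_mul_add_mul_eq_zero hI hNI h
  · rw [Set.pair_comm] at hI hNI
    exact mem_span_sub_one_natCast_of_mul_add_mul_eq_zero (a := b) (s := s) hI hNI
      (by linear_combination h)

end RingOfIntegers

end CyclicGroupRing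

/-- Let `p` be a prime and `R = ℤ[C_p] = ℤ[x]/(x^p - 1)` with `c` the
image of `x`.  For every faithful non-invertible ideal `I` of `R` (with generating pair
`(a, b)`), `Fitt₁(I) = R(c - 1) + Rp`, and this ideal is maximal in `R`. -/
theorem groupRing_fitting (p : ℕ) (hp : p.Prime) :
    (∀ (I : Ideal (CyclicGroupRing p)) (a b : CyclicGroupRing p),
      I = Ideal.span {a, b} →
      (∀ r : CyclicGroupRing p, (∀ x ∈ I, r * x = 0) → r = 0) →
      ¬ (Submodule.map (Algebra.linearMap (CyclicGroupRing p)
            (FractionRing (CyclicGroupRing p))) I *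
          ((1 : Submodule (CyclicGroupRing p) (FractionRing (CyclicGroupRing p))) /
            Submodule.map (Algebra.linearMap (CyclicGroupRing p)
              (FractionRing (CyclicGroupRing p))) I) = 1) →
      relFittingIdeal a b = Ideal.span {cyclicGen p - 1, (p : CyclicGroupRing p)}) ∧
    (Ideal.span {cyclicGen p - 1, (p : CyclicGroupRing p)}).IsMaximal := by
  have := Fact.mk hp
  refine ⟨fun I a b hIab hI hNI => ?_, CyclicGroupRing.isMaximal_span_sub_one_natCast⟩
  subst hIab
  exact CyclicGroupRing.relFittingIdeal_eq_span_sub_one_natCast hI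
    (mt mulInvIdeal_eq_top_iff.mp hNI)
end

section
/- Let I be a nonzero ideal of the order 𝒪_f = ℤ + ℤfω in a quadratic field K = ℚ(√m). Then I⁻¹ = (1/N(I))·σ(I), where N(I) = [𝒪_f : I] is the norm of I and σ is the nontrivial automorphism of K. -/
/-!
Write `O = ℤ + ℤθ` with `θ = fω`, so that `θ² = n + tθ` and `σθ = t - θ`, and let
`q z = (z - σ z) / (θ - σ θ)` be the `θ`-coordinate of `z`. For a `ℤ`-basis `α, β` of `I`, the
number `D = q (σ α * β)` is the determinant of `(α, β)` against `(1, θ)`, so `|D| = N(I)`.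
Two identities carry the proof. First, `q (x β) α - q (x α) β = D σ(x)`, so `D σ(x) ∈ I`
whenever `x I ⊆ O`. Second, `q (σ y * z)` is an integer multiple of `D` for `y, z ∈ I`;
applied to `z` and to `θ z`, this makes both coordinates of `σ(y) z` multiples of `D`.
-/

section QuadraticOrder

variable {K : Type*} [Field K]

def thetaCoord (σ : K →+* K) (θ z : K) : K := (z - σ z) / (θ - σ θ)

variable {σ : K →+* K} {θ : K}

theorem thetaCoord_add_mul (hδ : θ - σ θ ≠ 0) {a b : K} (ha : σ a = a) (hb : σ b = b) :
    thetaCoord σ θ (a + b * θ) = b := by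
  rw [thetaCoord, map_add, map_mul, ha, hb, div_eq_iff hδ]
  ring

theorem thetaCoord_intCast_add_mul (hδ : θ - σ θ ≠ 0) (a b : ℤ) :
    thetaCoord σ θ (a + b * θ) = b :=
  thetaCoord_add_mul hδ (map_intCast σ a) (map_intCast σ b)

theorem thetaCoord_conj_mul_combination (hσ : Function.Involutive σ) (s₁ s₂ w₁ w₂ : ℤ)
    (α β : K) :
    thetaCoord σ θ (σ (s₁ * α + s₂ * β) * (w₁ * α + w₂ * β)) =
      (s₁ * w₂ - s₂ * w₁) * thetaCoord σ θ (σ α * β) := by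
  simp only [thetaCoord, map_add, map_mul, map_intCast, hσ _]
  ring

theorem thetaCoord_mul_sub_mul (hσ : Function.Involutive σ) (x α β : K) :
    thetaCoord σ θ (x * β) * α - thetaCoord σ θ (x * α) * β =
      σ x * thetaCoord σ θ (σ α * β) := by
  simp only [thetaCoord, map_mul, hσ _]
  ring

variable {O : Subring K}

theorem exists_mem_eq_conj_div_iff_natAbs (I : Ideal O) (x : K) (D : ℤ) :
    (∃ y : O, y ∈ I ∧ x = σ y / D) ↔ ∃ y : O, y ∈ I ∧ x = σ y / D.natAbs := by
  rw [Nat.cast_natAbs]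
  rcases abs_choice D with h | h <;> rw [h]
  push_cast
  constructor <;> rintro ⟨y, hy, rfl⟩ <;> exact ⟨-y, I.neg_mem hy, by simp [neg_div, div_neg]⟩

theorem conj_mem {t : ℤ} (hO : ∀ x : K, x ∈ O ↔ ∃ a b : ℤ, x = a + b * θ) (hσθ : σ θ = t - θ)
    {z : K} (hz : z ∈ O) : σ z ∈ O := by
  obtain ⟨a, b, rfl⟩ := (hO z).1 hz
  refine (hO _).2 ⟨a + b * t, -b, ?_⟩
  rw [map_add, map_mul, map_intCast, map_intCast, hσθ]
  push_cast
  ring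

theorem thetaCoord_eq_intCast_of_mem (hO : ∀ x : K, x ∈ O ↔ ∃ a b : ℤ, x = a + b * θ)
    (hδ : θ - σ θ ≠ 0) {z : K} (hz : z ∈ O) : ∃ b : ℤ, thetaCoord σ θ z = b := by
  obtain ⟨a, b, rfl⟩ := (hO z).1 hz
  exact ⟨b, thetaCoord_intCast_add_mul hδ a b⟩

theorem exists_mem_eq_mul_of_thetaCoord {n t : ℤ}
    (hO : ∀ x : K, x ∈ O ↔ ∃ a b : ℤ, x = a + b * θ) (hθ : θ ^ 2 = n + t * θ)
    (hδ : θ - σ θ ≠ 0) {A D : K} (hA : A ∈ O) {k₁ k₂ : ℤ}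
    (h₁ : thetaCoord σ θ A = k₁ * D) (h₂ : thetaCoord σ θ (θ * A) = k₂ * D) :
    ∃ w ∈ O, A = D * w := by
  obtain ⟨P, Q, rfl⟩ := (hO A).1 hA
  have hθA : θ * (P + Q * θ) = ((Q * n : ℤ) : K) + ((P + Q * t : ℤ) : K) * θ := by
    push_cast
    linear_combination (Q : K) * hθ
  rw [thetaCoord_intCast_add_mul hδ] at h₁
  rw [hθA, thetaCoord_intCast_add_mul hδ] at h₂
  push_cast at h₂
  refine ⟨(k₂ - k₁ * t : ℤ) + k₁ * θ, (hO _).2 ⟨_, _, rfl⟩, ?_⟩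
  push_cast
  linear_combination h₂ + (θ - t) * h₁

theorem exists_basis_one_theta [CharZero K] (hO : ∀ x : K, x ∈ O ↔ ∃ a b : ℤ, x = a + b * θ)
    (hδ : θ - σ θ ≠ 0) :
    ∃ b : Module.Basis (Fin 2) ℤ O, ∀ z : O, (z : K) = b.repr z 0 + b.repr z 1 * θ := by
  have h1 : (1 : K) ∈ O := O.one_mem
  have hθO : θ ∈ O := (hO θ).2 ⟨0, 1, by simp⟩
  have hcoe : ∀ s w : ℤ, ((s • ⟨1, h1⟩ + w • ⟨θ, hθO⟩ : O) : K) = s + w * θ := by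
    intro s w
    simp [zsmul_eq_mul]
  have hli : LinearIndependent ℤ ![(⟨1, h1⟩ : O), ⟨θ, hθO⟩] := by
    refine LinearIndependent.pair_iff.2 fun s w hsw => ?_
    have h0 : ((s : ℤ) : K) + (w : ℤ) * θ = 0 := by rw [← hcoe, hsw]; rfl
    have hw : w = 0 := by
      have := thetaCoord_intCast_add_mul (σ := σ) hδ s w
      rw [h0] at this
      simpa [thetaCoord, eq_comm] using this
    subst hw
    exact ⟨by simpa using h0, rfl⟩
  have hsp : ⊤ ≤ Submodule.span ℤ (Set.range ![(⟨1, h1⟩ : O), ⟨θ, hθO⟩]) := by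
    rintro z -
    obtain ⟨a, b, hab⟩ := (hO z).1 z.2
    rw [Matrix.range_cons_cons_empty, Submodule.mem_span_pair]
    exact ⟨a, b, Subtype.ext (by rw [hcoe, hab])⟩
  refine ⟨.mk hli hsp, fun z => ?_⟩
  conv_lhs => rw [← (Module.Basis.mk hli hsp).sum_repr z]
  simp [Fin.sum_univ_two, Module.Basis.mk_apply, zsmul_eq_mul]

theorem thetaCoord_conj_mul_eq_det (hδ : θ - σ θ ≠ 0) (hσ : Function.Involutive σ)
    {b : Module.Basis (Fin 2) ℤ O} (hb : ∀ z : O, (z : K) = b.repr z 0 + b.repr z 1 * θ)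
    (v : Fin 2 → O) : thetaCoord σ θ (σ (v 0) * v 1) = b.det v := by
  have h := thetaCoord_conj_mul_combination (θ := θ) hσ (b.repr (v 0) 0) (b.repr (v 0) 1)
    (b.repr (v 1) 0) (b.repr (v 1) 1) 1 θ
  have hθ : thetaCoord σ θ θ = 1 := div_self hδ
  simp only [mul_one, map_one, one_mul, hθ, ← hb] at h
  rw [h, Module.Basis.det_apply, Matrix.det_fin_two]
  simp only [Module.Basis.toMatrix_apply]
  push_cast
  ring

variable (I : Ideal O) (bI : Module.Basis (Fin 2) ℤ I)

theorem exists_eq_intCast_mul_add_intCast_mul {z : O} (hz : z ∈ I) :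
    ∃ s w : ℤ, (z : K) = s * ((bI 0 : O) : K) + w * ((bI 1 : O) : K) := by
  refine ⟨bI.repr ⟨z, hz⟩ 0, bI.repr ⟨z, hz⟩ 1, ?_⟩
  have h := congrArg (fun w : I => ((w : O) : K)) (bI.sum_repr ⟨z, hz⟩)
  simp only [Fin.sum_univ_two] at h
  push_cast [zsmul_eq_mul] at h
  exact h.symm

theorem conj_mul_div_mem {n t : ℤ} (hO : ∀ x : K, x ∈ O ↔ ∃ a b : ℤ, x = a + b * θ)
    (hθ : θ ^ 2 = n + t * θ) (hσθ : σ θ = t - θ) (hδ : θ - σ θ ≠ 0)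
    (hσ : Function.Involutive σ) {D : K} (hD : thetaCoord σ θ (σ (bI 0 : O) * (bI 1 : O)) = D)
    (hD0 : D ≠ 0) {y z : O} (hy : y ∈ I) (hz : z ∈ I) : σ y * z / D ∈ O := by
  have hθO : θ ∈ O := (hO θ).2 ⟨0, 1, by simp⟩
  obtain ⟨s₁, s₂, hys⟩ := exists_eq_intCast_mul_add_intCast_mul I bI hy
  obtain ⟨w₁, w₂, hzw⟩ := exists_eq_intCast_mul_add_intCast_mul I bI hz
  obtain ⟨w₁', w₂', hθzw⟩ := exists_eq_intCast_mul_add_intCast_mul I bI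
    (I.mul_mem_left ⟨θ, hθO⟩ hz)
  obtain ⟨w, hw, hA⟩ := exists_mem_eq_mul_of_thetaCoord hO hθ hδ
    (O.mul_mem (conj_mem hO hσθ y.2) z.2) (k₁ := s₁ * w₂ - s₂ * w₁) (k₂ := s₁ * w₂' - s₂ * w₁')
    (by rw [hys, hzw, thetaCoord_conj_mul_combination hσ, hD]; push_cast; rfl)
    (by rw [mul_left_comm, hys, show θ * z = ((⟨θ, hθO⟩ * z : O) : K) from rfl, hθzw,
      thetaCoord_conj_mul_combination hσ, hD]; push_cast; rfl)
  rwa [hA, mul_div_cancel_left₀ _ hD0]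

theorem exists_mem_eq_mul_conj (hO : ∀ x : K, x ∈ O ↔ ∃ a b : ℤ, x = a + b * θ)
    (hδ : θ - σ θ ≠ 0) (hσ : Function.Involutive σ) {x : K}
    (hx : ∀ y : O, y ∈ I → x * y ∈ O) :
    ∃ y : O, y ∈ I ∧ (y : K) = thetaCoord σ θ (σ (bI 0 : O) * (bI 1 : O)) * σ x := by
  obtain ⟨e₀, he₀⟩ := thetaCoord_eq_intCast_of_mem hO hδ (hx _ (bI 0).2)
  obtain ⟨e₁, he₁⟩ := thetaCoord_eq_intCast_of_mem hO hδ (hx _ (bI 1).2)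
  refine ⟨e₁ • (bI 0 : O) - e₀ • (bI 1 : O),
    I.sub_mem (I.smul_of_tower_mem e₁ (bI 0).2) (I.smul_of_tower_mem e₀ (bI 1).2), ?_⟩
  rw [mul_comm, ← thetaCoord_mul_sub_mul hσ, he₀, he₁]
  simp [zsmul_eq_mul]

theorem mem_inv_iff_exists_eq_conj_div [CharZero K] {n t : ℤ}
    (hO : ∀ x : K, x ∈ O ↔ ∃ a b : ℤ, x = a + b * θ)
    (hθ : θ ^ 2 = n + t * θ) (hσθ : σ θ = t - θ) (hδ : θ - σ θ ≠ 0)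
    (hσ : Function.Involutive σ) {D : ℤ} (hD : thetaCoord σ θ (σ (bI 0 : O) * (bI 1 : O)) = D)
    (hD0 : D ≠ 0) (x : K) :
    (∀ y : O, y ∈ I → x * y ∈ O) ↔ ∃ y : O, y ∈ I ∧ x = σ y / D := by
  have hD0' : (D : K) ≠ 0 := by exact_mod_cast hD0
  constructor
  · intro hx
    obtain ⟨y, hy, hyx⟩ := exists_mem_eq_mul_conj I bI hO hδ hσ hx
    refine ⟨y, hy, ?_⟩
    rw [hyx, hD, map_mul, map_intCast, hσ x, mul_div_cancel_left₀ _ hD0']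
  · rintro ⟨y, hy, rfl⟩ z hz
    rw [div_mul_eq_mul_div]
    exact conj_mul_div_mem I bI hO hθ hσθ hδ hσ hD hD0' hy hz

end QuadraticOrder

theorem sqm_ne_zero {K : Type*} [Field K] [Algebra ℚ K] {sqm : K}
    (hbasis : ∀ x : K, ∃! c : ℚ × ℚ, x = algebraMap ℚ K c.1 + algebraMap ℚ K c.2 * sqm) :
    sqm ≠ 0 := by
  rintro rfl
  obtain ⟨c, -, hc⟩ := hbasis 0
  have := (hc (0, 0) (by simp)).trans (hc (0, 1) (by simp)).symm
  simp at this

theorem involutive_of_conj_sqm {K : Type*} [Field K] [Algebra ℚ K] {sqm : K}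
    (hbasis : ∀ x : K, ∃! c : ℚ × ℚ, x = algebraMap ℚ K c.1 + algebraMap ℚ K c.2 * sqm)
    {σ : K →+* K} (hσ : σ sqm = -sqm) : Function.Involutive σ := by
  intro x
  obtain ⟨c, rfl, -⟩ := hbasis x
  simp [hσ]

theorem exists_sq_eq_and_conj_eq {K : Type*} [Field K] [CharZero K] {sqm : K} {m : ℤ}
    (hsqm : sqm ^ 2 = (m : K)) (hsqm0 : sqm ≠ 0) {ω : K}
    (hω : ω = if m % 4 = 1 then (1 + sqm) / 2 else sqm) {f : ℕ} (hf : 0 < f)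
    {σ : K →+* K} (hσ : σ sqm = -sqm) :
    ∃ n t : ℤ, (f * ω) ^ 2 = n + t * (f * ω) ∧ σ (f * ω) = t - f * ω ∧
      f * ω - σ (f * ω) ≠ 0 := by
  have hf0 : (f : K) ≠ 0 := by exact_mod_cast hf.ne'
  split_ifs at hω with h4 <;> subst hω
  · obtain ⟨k, rfl⟩ : ∃ k : ℤ, m = 4 * k + 1 := ⟨m / 4, by omega⟩
    have hσω : σ ((1 + sqm) / 2) = (1 - sqm) / 2 := by
      rw [map_div₀, map_add, map_one, map_ofNat, hσ, sub_eq_add_neg]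
    refine ⟨f ^ 2 * k, f, ?_, ?_, ?_⟩
    · push_cast at hsqm ⊢
      linear_combination (f : K) ^ 2 / 4 * hsqm
    · rw [map_mul, map_natCast, hσω]
      push_cast
      ring
    · rw [map_mul, map_natCast, hσω, ← mul_sub]
      ring_nf
      exact mul_ne_zero hf0 hsqm0
  · refine ⟨f ^ 2 * m, 0, ?_, ?_, ?_⟩
    · push_cast
      linear_combination (f : K) ^ 2 * hsqm
    · simp [hσ]
    · rw [map_mul, map_natCast, hσ]
      ring_nf
      exact mul_ne_zero (mul_ne_zero hf0 hsqm0) two_ne_zero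

theorem order_ideal_inv_eq_general (m : ℤ)
    (K : Type*) [Field K] [Algebra ℚ K] (sqm : K) (hsqm : sqm ^ 2 = (m : K))
    (hbasis : ∀ x : K, ∃! c : ℚ × ℚ,
      x = algebraMap ℚ K c.1 + algebraMap ℚ K c.2 * sqm)
    (ω : K) (hω : ω = if m % 4 = 1 then (1 + sqm) / 2 else sqm)
    (f : ℕ) (hf : 0 < f)
    (O : Subring K) (hO : ∀ x : K, x ∈ O ↔ ∃ a b : ℤ, x = a + b * ((f : K) * ω))
    (σ : K →+* K) (hσ : σ sqm = -sqm)
    (I : Ideal O) (hI : I ≠ ⊥) :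
    ∀ x : K, (∀ y : O, y ∈ I → x * (y : K) ∈ O) ↔
      ∃ y : O, y ∈ I ∧ x = σ (y : K) / (Nat.card (O ⧸ I) : K) := by
  have := algebraRat.charZero K
  have hσσ := involutive_of_conj_sqm hbasis hσ
  obtain ⟨n, t, hθ, hσθ, hδ⟩ := exists_sq_eq_and_conj_eq hsqm (sqm_ne_zero hbasis) hω hf hσ
  obtain ⟨bO, hbO⟩ := exists_basis_one_theta hO hδ
  have := Module.Free.of_basis bO
  have := Module.Finite.of_basis bO
  let bI := I.selfBasis bO hI
  have hN : Nat.card (O ⧸ I) = (bO.det ((↑) ∘ bI : Fin 2 → O)).natAbs :=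
    (Submodule.natAbs_det_basis_change bO (I.restrictScalars ℤ) bI).symm
  have hN0 : bO.det ((↑) ∘ bI : Fin 2 → O) ≠ 0 := by
    have := I.finiteQuotientOfFreeOfNeBot hI
    exact Int.natAbs_ne_zero.mp (hN ▸ Nat.card_pos.ne')
  have hD := thetaCoord_conj_mul_eq_det hδ hσσ hbO ((↑) ∘ bI : Fin 2 → O)
  intro x
  rw [hN, ← exists_mem_eq_conj_div_iff_natAbs]
  exact mem_inv_iff_exists_eq_conj_div I bI hO hθ hσθ hδ hσσ hD hN0 x

/-- Let `K = ℚ(√m)` (`m` squarefree, `m ≠ 1`), `ω = √m` or `(1+√m)/2`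
according as `m ≢ 1` or `m ≡ 1 (mod 4)`, and let `O = 𝒪_f = ℤ + ℤfω` be the order of
conductor `f`.  For every nonzero ideal `I` of `O`,
`I⁻¹ = (1/N(I)) · σ(I)` where `N(I) = [O : I]` and `σ` is the nontrivial automorphism. -/
theorem order_ideal_inv_eq (m : ℤ) (hm : Squarefree m) (hm1 : m ≠ 1)
    (K : Type*) [Field K] [Algebra ℚ K] (sqm : K) (hsqm : sqm ^ 2 = (m : K))
    (hbasis : ∀ x : K, ∃! c : ℚ × ℚ,
      x = algebraMap ℚ K c.1 + algebraMap ℚ K c.2 * sqm)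
    (ω : K) (hω : ω = if m % 4 = 1 then (1 + sqm) / 2 else sqm)
    (f : ℕ) (hf : 0 < f)
    (O : Subring K) (hO : ∀ x : K, x ∈ O ↔ ∃ a b : ℤ, x = a + b * ((f : K) * ω))
    (σ : K →+* K) (hσ : σ sqm = -sqm)
    (I : Ideal O) (hI : I ≠ ⊥) :
    ∀ x : K, (∀ y : O, y ∈ I → x * (y : K) ∈ O) ↔
      ∃ y : O, y ∈ I ∧ x = σ (y : K) / (Nat.card (O ⧸ I) : K) :=
  order_ideal_inv_eq_general m K sqm hsqm hbasis ω hω f hf O hO σ hσ I hI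
end
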